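/- arXiv:math/0703348 — 11 statements merged into one kernel-verified Lean document; each statement's English description precedes it below -/
import Mathlib

section
/- Let V be a finite-dimensional real vector space, ω and η nondegenerate alternating bilinear forms on V, and A the recursion operator of (ω, η), and suppose A² = Id. Then V is the internal direct sum of the left kernel of ω−η and the left kernel of ω+η: these two subspaces intersect trivially and span V. -/
/-- If the recursion operator `A` of `(ω, η)` satisfies `A² = Id`, then `V` is
the internal direct sum of the left kernel of `ω - η` and the left kernel of `ω + η`:
these two subspaces intersect trivially and span `V`.  (Here the left kernel of a bilinear form
`Ω : V →ₗ[ℝ] V →ₗ[ℝ] ℝ` is `LinearMap.ker Ω = {x | ∀ y, Ω x y = 0}`.) -/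
theorem kernels_of_difference_and_sum_are_complementary
    (V : Type*) [AddCommGroup V] [Module ℝ V] [FiniteDimensional ℝ V]
    (ω η : V →ₗ[ℝ] V →ₗ[ℝ] ℝ)
    (hω_alt : ∀ x : V, ω x x = 0) (hη_alt : ∀ x : V, η x x = 0)
    (hω_nd : ∀ x : V, (∀ y : V, ω x y = 0) → x = 0)
    (hη_nd : ∀ x : V, (∀ y : V, η x y = 0) → x = 0)
    (A : V →ₗ[ℝ] V) (hA : ∀ x y : V, ω x y = η (A x) y)
    (hA2 : A ∘ₗ A = LinearMap.id) :
    LinearMap.ker (ω - η) ⊓ LinearMap.ker (ω + η) = ⊥ ∧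
      LinearMap.ker (ω - η) ⊔ LinearMap.ker (ω + η) = ⊤ := by
  have hker1 : ∀ x : V, x ∈ LinearMap.ker (ω - η) ↔ A x = x := by
    intro x
    constructor
    · intro hx
      have h0 : (ω - η) x = 0 := LinearMap.mem_ker.mp hx
      have h2 : A x - x = 0 := by
        apply hη_nd
        intro y
        have h1 : ω x y - η x y = 0 := by
          have := congrArg (fun f => f y) h0
          simpa using this
        have h3 : η (A x) y - η x y = 0 := by rw [← hA]; exact h1
        simpa [map_sub] using h3
      exact sub_eq_zero.mp h2
    · intro hx
      apply LinearMap.mem_ker.mpr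
      ext y
      simp [hA x y, hx]
  have hker2 : ∀ x : V, x ∈ LinearMap.ker (ω + η) ↔ A x = -x := by
    intro x
    constructor
    · intro hx
      have h0 : (ω + η) x = 0 := LinearMap.mem_ker.mp hx
      have h2 : A x + x = 0 := by
        apply hη_nd
        intro y
        have h1 : ω x y + η x y = 0 := by
          have := congrArg (fun f => f y) h0
          simpa using this
        have h3 : η (A x) y + η x y = 0 := by rw [← hA]; exact h1
        simpa [map_add] using h3
      exact eq_neg_of_add_eq_zero_left h2
    · intro hx
      apply LinearMap.mem_ker.mpr
      ext y
      simp [hA x y, hx]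
  constructor
  · rw [eq_bot_iff]
    intro x hx
    have h1 : A x = x := (hker1 x).mp hx.1
    have h2 : A x = -x := (hker2 x).mp hx.2
    have hxx : x = -x := h1.symm.trans h2
    have hx0 : x = 0 := by
      have hadd : x + x = 0 := by rw [← neg_eq_iff_add_eq_zero]; exact hxx.symm
      have h2x : (2 : ℝ) • x = 0 := by rw [two_smul]; exact hadd
      simpa using (smul_eq_zero.mp h2x).resolve_left (by norm_num)
    simpa using hx0
  · rw [eq_top_iff]
    intro x _
    have hdecomp : x = (2⁻¹ : ℝ) • (x + A x) + (2⁻¹ : ℝ) • (x - A x) := by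
      module
    have hAA : A (A x) = x := by
      have := congrArg (fun f => f x) hA2
      simpa using this
    have hm1 : (2⁻¹ : ℝ) • (x + A x) ∈ LinearMap.ker (ω - η) := by
      rw [hker1]
      simp [map_add, hAA, add_comm]
    have hm2 : (2⁻¹ : ℝ) • (x - A x) ∈ LinearMap.ker (ω + η) := by
      rw [hker2]
      simp only [map_smul, map_sub, hAA]
      module
    rw [hdecomp]
    exact Submodule.add_mem _ (Submodule.mem_sup_left hm1) (Submodule.mem_sup_right hm2)
end

section
/- Let V be a finite-dimensional real vector space with an internal direct sum decomposition V = F ⊕ G, and let Ω⁺ and Ω⁻ be alternating bilinear forms on V whose left kernels are exactly F and exactly G respectively. Then ω := (1/2)(Ω⁺ + Ω⁻) and η := (1/2)(Ω⁺ − Ω⁻) are nondegenerate alternating bilinear forms, and their recursion operator A satisfies A g = g for all g ∈ G and A f = −f for all f ∈ F; in particular A² = Id. -/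
/-!
An alternating form pairs trivially with its own left kernel from either side. So if `x` lies in
the left kernel of `Ω⁺ ± Ω⁻`, pairing against `F = ker Ω⁺` and against `G = ker Ω⁻` shows that
`Ω⁺ x` and `Ω⁻ x` both vanish on `F ⊔ G = V`, whence `x ∈ F ⊓ G = 0`.

The recursion operator is the reflection `A` fixing `G` and negating `F`: since `Ω⁺` kills `F`
and `Ω⁻` kills `G`, we get `Ω⁺ ∘ A = Ω⁺` and `Ω⁻ ∘ A = -Ω⁻`, so `(Ω⁺ - Ω⁻) ∘ A = Ω⁺ + Ω⁻`.
-/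

namespace LinearMap

variable {R M N : Type*} [CommRing R] [AddCommGroup M] [Module R M] [AddCommGroup N] [Module R N]

section Reflection

variable {p q : Submodule R M} (h : IsCompl p q)

noncomputable def reflectionOfIsCompl : M →ₗ[R] M :=
  ofIsCompl h (-p.subtype) q.subtype

theorem reflectionOfIsCompl_apply_of_mem_left {x : M} (hx : x ∈ p) :
    reflectionOfIsCompl h x = -x :=
  ofIsCompl_apply_left h ⟨x, hx⟩

theorem reflectionOfIsCompl_apply_of_mem_right {x : M} (hx : x ∈ q) :
    reflectionOfIsCompl h x = x :=
  ofIsCompl_apply_right h ⟨x, hx⟩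

theorem reflectionOfIsCompl_comp_self :
    reflectionOfIsCompl h ∘ₗ reflectionOfIsCompl h = id :=
  ext_on_codisjoint h.codisjoint
    (fun x hx ↦ by simp [reflectionOfIsCompl_apply_of_mem_left h hx])
    (fun x hx ↦ by simp [reflectionOfIsCompl_apply_of_mem_right h hx])

theorem comp_reflectionOfIsCompl_of_le_ker {f : M →ₗ[R] N} (hf : p ≤ ker f) :
    f ∘ₗ reflectionOfIsCompl h = f :=
  ext_on_codisjoint h.codisjoint
    (fun x hx ↦ by simp [reflectionOfIsCompl_apply_of_mem_left h hx, mem_ker.mp (hf hx)])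
    (fun x hx ↦ by simp [reflectionOfIsCompl_apply_of_mem_right h hx])

theorem comp_reflectionOfIsCompl_of_le_ker' {f : M →ₗ[R] N} (hf : q ≤ ker f) :
    f ∘ₗ reflectionOfIsCompl h = -f :=
  ext_on_codisjoint h.codisjoint
    (fun x hx ↦ by simp [reflectionOfIsCompl_apply_of_mem_left h hx])
    (fun x hx ↦ by simp [reflectionOfIsCompl_apply_of_mem_right h hx, mem_ker.mp (hf hx)])

end Reflection

theorem eq_zero_of_isCompl_le_ker {f : M →ₗ[R] N} {p q : Submodule R M} (h : IsCompl p q)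
    (hp : p ≤ ker f) (hq : q ≤ ker f) : f = 0 :=
  ker_eq_top.mp (eq_top_iff.mpr (h.sup_eq_top ▸ sup_le hp hq))

theorem IsAlt.apply_eq_zero_of_mem_ker {B : M →ₗ[R] M →ₗ[R] N} (hB : B.IsAlt) {x : M}
    (hx : x ∈ ker B) (y : M) : B y x = 0 :=
  hB.eq_iff.mp (by simp [mem_ker.mp hx])

theorem ker_add_eq_bot_of_isCompl_ker {B₁ B₂ : M →ₗ[R] M →ₗ[R] N} (h₁ : B₁.IsAlt)
    (h₂ : B₂.IsAlt) (h : IsCompl (ker B₁) (ker B₂)) : ker (B₁ + B₂) = ⊥ := by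
  refine eq_bot_iff.mpr fun x hx ↦ ?_
  have hsum (y : M) : B₁ x y + B₂ x y = 0 := by simpa using congr($(mem_ker.mp hx) y)
  have hB₂ : B₂ x = 0 := eq_zero_of_isCompl_le_ker h
    (fun y hy ↦ by simpa [h₁.apply_eq_zero_of_mem_ker hy] using hsum y)
    (fun y hy ↦ h₂.apply_eq_zero_of_mem_ker hy x)
  have hB₁ : B₁ x = 0 := by
    ext y
    simpa [hB₂] using hsum y
  exact h.disjoint.le_bot ⟨mem_ker.mpr hB₁, mem_ker.mpr hB₂⟩

end LinearMap

open LinearMap in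
theorem symplectic_pair_gives_recursion_operator_square_id_general
    (V : Type*) [AddCommGroup V] [Module ℝ V]
    (F G : Submodule ℝ V) (hFG : IsCompl F G)
    (Ωp Ωm : V →ₗ[ℝ] V →ₗ[ℝ] ℝ)
    (hΩp_alt : ∀ x : V, Ωp x x = 0) (hΩm_alt : ∀ x : V, Ωm x x = 0)
    (hΩp_ker : ∀ x : V, (∀ y : V, Ωp x y = 0) ↔ x ∈ F)
    (hΩm_ker : ∀ x : V, (∀ y : V, Ωm x y = 0) ↔ x ∈ G) :
    ∀ ω η : V →ₗ[ℝ] V →ₗ[ℝ] ℝ,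
      ω = (1 / 2 : ℝ) • (Ωp + Ωm) → η = (1 / 2 : ℝ) • (Ωp - Ωm) →
      (∀ x : V, ω x x = 0) ∧ (∀ x : V, η x x = 0) ∧
      (∀ x : V, (∀ y : V, ω x y = 0) → x = 0) ∧
      (∀ x : V, (∀ y : V, η x y = 0) → x = 0) ∧
      (∃ A : V →ₗ[ℝ] V, (∀ x y : V, ω x y = η (A x) y) ∧
        (∀ g ∈ G, A g = g) ∧ (∀ f ∈ F, A f = -f) ∧ A ∘ₗ A = LinearMap.id) := by
  rintro ω η rfl rfl
  have hF : ker Ωp = F := by ext x; simpa [LinearMap.ext_iff] using hΩp_ker x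
  have hG : ker Ωm = G := by ext x; simpa [LinearMap.ext_iff] using hΩm_ker x
  have hKer : IsCompl (ker Ωp) (ker Ωm) := hF ▸ hG ▸ hFG
  have hhalf : (1 / 2 : ℝ) ≠ 0 := by norm_num
  have hA : (1 / 2 : ℝ) • (Ωp + Ωm) = ((1 / 2 : ℝ) • (Ωp - Ωm)) ∘ₗ reflectionOfIsCompl hFG := by
    rw [smul_comp, sub_comp, comp_reflectionOfIsCompl_of_le_ker hFG hF.ge,
      comp_reflectionOfIsCompl_of_le_ker' hFG hG.ge]
    module
  refine ⟨fun x ↦ by simp [hΩp_alt x, hΩm_alt x], fun x ↦ by simp [hΩp_alt x, hΩm_alt x],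
    separatingLeft_iff_ker_eq_bot.mpr ?_, separatingLeft_iff_ker_eq_bot.mpr ?_,
    reflectionOfIsCompl hFG, fun x y ↦ congr($hA x y),
    fun g ↦ reflectionOfIsCompl_apply_of_mem_right hFG,
    fun f ↦ reflectionOfIsCompl_apply_of_mem_left hFG, reflectionOfIsCompl_comp_self hFG⟩
  · rw [ker_smul _ _ hhalf]
    exact ker_add_eq_bot_of_isCompl_ker hΩp_alt hΩm_alt hKer
  · -- `rw [sub_eq_add_neg]` fails: the `Sub` instance here agrees with the `AddGroup` one only
    -- up to unfolding the `Module ℝ` structure on `V →ₗ[ℝ] ℝ`.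
    rw [ker_smul _ _ hhalf, show Ωp - Ωm = Ωp + -Ωm from sub_eq_add_neg Ωp Ωm]
    exact ker_add_eq_bot_of_isCompl_ker hΩp_alt (BilinForm.isAlt_neg.mpr hΩm_alt)
      ((ker_neg Ωm).symm ▸ hKer)

/-- Let `V = F ⊕ G` be an internal direct sum, and let `Ω⁺`, `Ω⁻` be
alternating bilinear forms whose left kernels are exactly `F` and exactly `G` respectively.
Then `ω := ½(Ω⁺ + Ω⁻)` and `η := ½(Ω⁺ - Ω⁻)` are nondegenerate alternating bilinear forms,
and their recursion operator `A` satisfies `A g = g` for `g ∈ G`, `A f = -f` for `f ∈ F`;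
in particular `A² = Id`. -/
theorem symplectic_pair_gives_recursion_operator_square_id
    (V : Type*) [AddCommGroup V] [Module ℝ V] [FiniteDimensional ℝ V]
    (F G : Submodule ℝ V) (hFG : IsCompl F G)
    (Ωp Ωm : V →ₗ[ℝ] V →ₗ[ℝ] ℝ)
    (hΩp_alt : ∀ x : V, Ωp x x = 0) (hΩm_alt : ∀ x : V, Ωm x x = 0)
    (hΩp_ker : ∀ x : V, (∀ y : V, Ωp x y = 0) ↔ x ∈ F)
    (hΩm_ker : ∀ x : V, (∀ y : V, Ωm x y = 0) ↔ x ∈ G) :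
    ∀ ω η : V →ₗ[ℝ] V →ₗ[ℝ] ℝ,
      ω = (1 / 2 : ℝ) • (Ωp + Ωm) → η = (1 / 2 : ℝ) • (Ωp - Ωm) →
      (∀ x : V, ω x x = 0) ∧ (∀ x : V, η x x = 0) ∧
      (∀ x : V, (∀ y : V, ω x y = 0) → x = 0) ∧
      (∀ x : V, (∀ y : V, η x y = 0) → x = 0) ∧
      (∃ A : V →ₗ[ℝ] V, (∀ x y : V, ω x y = η (A x) y) ∧
        (∀ g ∈ G, A g = g) ∧ (∀ f ∈ F, A f = -f) ∧ A ∘ₗ A = LinearMap.id) :=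
  symplectic_pair_gives_recursion_operator_square_id_general V F G hFG Ωp Ωm hΩp_alt hΩm_alt hΩp_ker
    hΩm_ker
end

section
/- Let V be a finite-dimensional real vector space, ω and η nondegenerate alternating bilinear forms on V, and A the recursion operator of (ω, η), and suppose A² = −Id. Define the complex-valued bilinear form Ω(x,y) := ω(x,y) + i·η(x,y). Then Ω(A x, y) = i·Ω(x,y) and Ω(x, A y) = i·Ω(x,y) for all x, y ∈ V; that is, Ω is complex-bilinear with respect to the complex structure A on V. -/
/-- If the recursion operator `A` of `(ω, η)` satisfies `A² = -Id`, then the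
complex-valued form `Ω(x,y) = ω(x,y) + i·η(x,y)` satisfies `Ω(A x, y) = i·Ω(x,y)` and
`Ω(x, A y) = i·Ω(x,y)`; i.e. `Ω` is complex-bilinear for the complex structure `A`. -/
theorem complex_form_is_complex_bilinear
    (V : Type*) [AddCommGroup V] [Module ℝ V] [FiniteDimensional ℝ V]
    (ω η : V →ₗ[ℝ] V →ₗ[ℝ] ℝ)
    (hω_alt : ∀ x : V, ω x x = 0) (hη_alt : ∀ x : V, η x x = 0)
    (hω_nd : ∀ x : V, (∀ y : V, ω x y = 0) → x = 0)
    (hη_nd : ∀ x : V, (∀ y : V, η x y = 0) → x = 0)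
    (A : V →ₗ[ℝ] V) (hA : ∀ x y : V, ω x y = η (A x) y)
    (hA2 : A ∘ₗ A = -LinearMap.id) :
    (∀ x y : V, (ω (A x) y : ℂ) + Complex.I * (η (A x) y : ℂ) =
        Complex.I * ((ω x y : ℂ) + Complex.I * (η x y : ℂ))) ∧
    (∀ x y : V, (ω x (A y) : ℂ) + Complex.I * (η x (A y) : ℂ) =
        Complex.I * ((ω x y : ℂ) + Complex.I * (η x y : ℂ))) := by
  have hA2' : ∀ x : V, A (A x) = -x := fun x => by
    have := LinearMap.ext_iff.mp hA2 x
    simpa using this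
  have hωsk : ∀ x y : V, ω x y = - ω y x := fun x y => by
    have h := hω_alt (x + y)
    simp only [map_add, LinearMap.add_apply, hω_alt] at h
    linarith
  have hηsk : ∀ x y : V, η x y = - η y x := fun x y => by
    have h := hη_alt (x + y)
    simp only [map_add, LinearMap.add_apply, hη_alt] at h
    linarith
  have key1 : ∀ x y : V, ω (A x) y = - η x y := fun x y => by
    rw [hA, hA2' x]; simp
  have key2 : ∀ x y : V, η (A x) y = ω x y := fun x y => (hA x y).symm
  have key3 : ∀ x y : V, ω x (A y) = - η x y := fun x y => by
    rw [hωsk, key1 y x, hηsk x y]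
  have key4 : ∀ x y : V, η x (A y) = ω x y := fun x y => by
    rw [hηsk, key2 y x, ← hωsk]
  constructor
  · intro x y
    rw [key1, key2]
    push_cast
    linear_combination (- (η x y : ℂ)) * Complex.I_sq
  · intro x y
    rw [key3, key4]
    push_cast
    linear_combination (- (η x y : ℂ)) * Complex.I_sq
end

section
/- Let V be a four-dimensional real vector space, ω and η nondegenerate alternating bilinear forms on V, and A the recursion operator of (ω, η), and suppose A² = −Id. Then ω ∧ ω = η ∧ η and ω ∧ η = 0 as alternating 4-forms on V; that is, ω and η form a conformal symplectic couple. -/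
open Module

section Aux

variable {K : Type*} [Field K] {V : Type*} [AddCommGroup V] [Module K V]

private lemma qz₁₂ (Ω : V → V → K) (halt : ∀ x, Ω x x = 0)
    (a c d : V) : Ω a a * Ω c d - Ω a c * Ω a d + Ω a d * Ω a c = 0 := by
  rw [halt]; ring

private lemma qz₁₃ (Ω : V → V → K) (halt : ∀ x, Ω x x = 0)
    (hanti : ∀ x y, Ω y x = -Ω x y) (a b d : V) :
    Ω a b * Ω a d - Ω a a * Ω b d + Ω a d * Ω b a = 0 := by
  rw [halt, hanti a b]; ring

private lemma qz₁₄ (Ω : V → V → K) (halt : ∀ x, Ω x x = 0)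
    (hanti : ∀ x y, Ω y x = -Ω x y) (a b c : V) :
    Ω a b * Ω c a - Ω a c * Ω b a + Ω a a * Ω b c = 0 := by
  rw [halt, hanti a b, hanti a c]; ring

private lemma qz₂₃ (Ω : V → V → K) (halt : ∀ x, Ω x x = 0)
    (a b d : V) : Ω a b * Ω b d - Ω a b * Ω b d + Ω a d * Ω b b = 0 := by
  rw [halt]; ring

private lemma qz₂₄ (Ω : V → V → K) (halt : ∀ x, Ω x x = 0)
    (hanti : ∀ x y, Ω y x = -Ω x y) (a b c : V) :
    Ω a b * Ω c b - Ω a c * Ω b b + Ω a b * Ω b c = 0 := by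
  rw [halt, hanti b c]; ring

private lemma qz₃₄ (Ω : V → V → K) (halt : ∀ x, Ω x x = 0)
    (a b c : V) : Ω a b * Ω c c - Ω a c * Ω b c + Ω a c * Ω b c = 0 := by
  rw [halt]; ring

/-- The alternating 4-linear map `(x₁,x₂,x₃,x₄) ↦ Ω₁₂Ω₃₄ - Ω₁₃Ω₂₄ + Ω₁₄Ω₂₃` built
from an alternating bilinear form `Ω`. -/
def quadAlt (Ω : V → V → K)
    (haddl : ∀ x x' y, Ω (x + x') y = Ω x y + Ω x' y)
    (haddr : ∀ x y y', Ω x (y + y') = Ω x y + Ω x y')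
    (hsmull : ∀ (z : K) x y, Ω (z • x) y = z * Ω x y)
    (hsmulr : ∀ (z : K) x y, Ω x (z • y) = z * Ω x y)
    (halt : ∀ x, Ω x x = 0)
    (hanti : ∀ x y, Ω y x = -Ω x y) :
    V [⋀^Fin 4]→ₗ[K] K where
  toMultilinearMap :=
  { toFun := fun v => Ω (v 0) (v 1) * Ω (v 2) (v 3) - Ω (v 0) (v 2) * Ω (v 1) (v 3)
      + Ω (v 0) (v 3) * Ω (v 1) (v 2)
    map_update_add' := fun {inst} v i a b => by
      have hinst : inst = instDecidableEqFin 4 := Subsingleton.elim _ _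
      subst hinst
      fin_cases i <;>
        simp [Function.update_apply, haddl, haddr] <;> ring
    map_update_smul' := fun {inst} v i c a => by
      have hinst : inst = instDecidableEqFin 4 := Subsingleton.elim _ _
      subst hinst
      fin_cases i <;>
        simp [Function.update_apply, hsmull, hsmulr, smul_eq_mul] <;> ring }
  map_eq_zero_of_eq' := fun v i j hv hij => by
    fin_cases i <;> fin_cases j
    · exact absurd rfl hij
    · have h : v 0 = v 1 := hv
      show Ω (v 0) (v 1) * Ω (v 2) (v 3) - Ω (v 0) (v 2) * Ω (v 1) (v 3)
        + Ω (v 0) (v 3) * Ω (v 1) (v 2) = 0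
      rw [h]; exact qz₁₂ Ω halt (v 1) (v 2) (v 3)
    · have h : v 0 = v 2 := hv
      show Ω (v 0) (v 1) * Ω (v 2) (v 3) - Ω (v 0) (v 2) * Ω (v 1) (v 3)
        + Ω (v 0) (v 3) * Ω (v 1) (v 2) = 0
      rw [h]; exact qz₁₃ Ω halt hanti (v 2) (v 1) (v 3)
    · have h : v 0 = v 3 := hv
      show Ω (v 0) (v 1) * Ω (v 2) (v 3) - Ω (v 0) (v 2) * Ω (v 1) (v 3)
        + Ω (v 0) (v 3) * Ω (v 1) (v 2) = 0
      rw [h]; exact qz₁₄ Ω halt hanti (v 3) (v 1) (v 2)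
    · have h : v 1 = v 0 := hv
      show Ω (v 0) (v 1) * Ω (v 2) (v 3) - Ω (v 0) (v 2) * Ω (v 1) (v 3)
        + Ω (v 0) (v 3) * Ω (v 1) (v 2) = 0
      rw [h]; exact qz₁₂ Ω halt (v 0) (v 2) (v 3)
    · exact absurd rfl hij
    · have h : v 1 = v 2 := hv
      show Ω (v 0) (v 1) * Ω (v 2) (v 3) - Ω (v 0) (v 2) * Ω (v 1) (v 3)
        + Ω (v 0) (v 3) * Ω (v 1) (v 2) = 0
      rw [h]; exact qz₂₃ Ω halt (v 0) (v 2) (v 3)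
    · have h : v 1 = v 3 := hv
      show Ω (v 0) (v 1) * Ω (v 2) (v 3) - Ω (v 0) (v 2) * Ω (v 1) (v 3)
        + Ω (v 0) (v 3) * Ω (v 1) (v 2) = 0
      rw [h]; exact qz₂₄ Ω halt hanti (v 0) (v 3) (v 2)
    · have h : v 2 = v 0 := hv
      show Ω (v 0) (v 1) * Ω (v 2) (v 3) - Ω (v 0) (v 2) * Ω (v 1) (v 3)
        + Ω (v 0) (v 3) * Ω (v 1) (v 2) = 0
      rw [h]; exact qz₁₃ Ω halt hanti (v 0) (v 1) (v 3)
    · have h : v 2 = v 1 := hv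
      show Ω (v 0) (v 1) * Ω (v 2) (v 3) - Ω (v 0) (v 2) * Ω (v 1) (v 3)
        + Ω (v 0) (v 3) * Ω (v 1) (v 2) = 0
      rw [h]; exact qz₂₃ Ω halt (v 0) (v 1) (v 3)
    · exact absurd rfl hij
    · have h : v 2 = v 3 := hv
      show Ω (v 0) (v 1) * Ω (v 2) (v 3) - Ω (v 0) (v 2) * Ω (v 1) (v 3)
        + Ω (v 0) (v 3) * Ω (v 1) (v 2) = 0
      rw [h]; exact qz₃₄ Ω halt (v 0) (v 1) (v 3)
    · have h : v 3 = v 0 := hv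
      show Ω (v 0) (v 1) * Ω (v 2) (v 3) - Ω (v 0) (v 2) * Ω (v 1) (v 3)
        + Ω (v 0) (v 3) * Ω (v 1) (v 2) = 0
      rw [h]; exact qz₁₄ Ω halt hanti (v 0) (v 1) (v 2)
    · have h : v 3 = v 1 := hv
      show Ω (v 0) (v 1) * Ω (v 2) (v 3) - Ω (v 0) (v 2) * Ω (v 1) (v 3)
        + Ω (v 0) (v 3) * Ω (v 1) (v 2) = 0
      rw [h]; exact qz₂₄ Ω halt hanti (v 0) (v 1) (v 2)
    · have h : v 3 = v 2 := hv
      show Ω (v 0) (v 1) * Ω (v 2) (v 3) - Ω (v 0) (v 2) * Ω (v 1) (v 3)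
        + Ω (v 0) (v 3) * Ω (v 1) (v 2) = 0
      rw [h]; exact qz₃₄ Ω halt (v 0) (v 1) (v 2)
    · exact absurd rfl hij

/-- On a `K`-vector space of dimension `< 4`, the quadratic expression vanishes. -/
theorem quad_eq_zero [FiniteDimensional K V] (hdim : Module.finrank K V < 4)
    (Ω : V → V → K)
    (haddl : ∀ x x' y, Ω (x + x') y = Ω x y + Ω x' y)
    (haddr : ∀ x y y', Ω x (y + y') = Ω x y + Ω x y')
    (hsmull : ∀ (z : K) x y, Ω (z • x) y = z * Ω x y)
    (hsmulr : ∀ (z : K) x y, Ω x (z • y) = z * Ω x y)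
    (halt : ∀ x, Ω x x = 0)
    (hanti : ∀ x y, Ω y x = -Ω x y)
    (x₁ x₂ x₃ x₄ : V) :
    Ω x₁ x₂ * Ω x₃ x₄ - Ω x₁ x₃ * Ω x₂ x₄ + Ω x₁ x₄ * Ω x₂ x₃ = 0 := by
  have hdep : ¬ LinearIndependent K ![x₁, x₂, x₃, x₄] := by
    intro hli
    have := hli.fintype_card_le_finrank
    simp at this
    omega
  have h0 := (quadAlt Ω haddl haddr hsmull hsmulr halt hanti).map_linearDependent
    ![x₁, x₂, x₃, x₄] hdep
  simpa [quadAlt] using h0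

end Aux



/-- The wedge product of two alternating bilinear forms, evaluated on four vectors:
the sum over the six (2,2)-shuffles of `{1,2,3,4}` with signs. -/
def wedge2 {V : Type*} [AddCommGroup V] [Module ℝ V]
    (α β : V →ₗ[ℝ] V →ₗ[ℝ] ℝ) (x₁ x₂ x₃ x₄ : V) : ℝ :=
  α x₁ x₂ * β x₃ x₄ - α x₁ x₃ * β x₂ x₄ + α x₁ x₄ * β x₂ x₃ +
    α x₂ x₃ * β x₁ x₄ - α x₂ x₄ * β x₁ x₃ + α x₃ x₄ * β x₁ x₂

/-- If `V` is four-dimensional and the recursion operator `A` of `(ω, η)`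
satisfies `A² = -Id`, then `ω ∧ ω = η ∧ η` and `ω ∧ η = 0`; that is, `ω` and `η` form a
conformal symplectic couple. -/
theorem conformal_symplectic_couple_of_recursion_operator_square_neg_id
    (V : Type*) [AddCommGroup V] [Module ℝ V] [FiniteDimensional ℝ V]
    (h4 : Module.finrank ℝ V = 4)
    (ω η : V →ₗ[ℝ] V →ₗ[ℝ] ℝ)
    (hω_alt : ∀ x : V, ω x x = 0) (hη_alt : ∀ x : V, η x x = 0)
    (hω_nd : ∀ x : V, (∀ y : V, ω x y = 0) → x = 0)
    (hη_nd : ∀ x : V, (∀ y : V, η x y = 0) → x = 0)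
    (A : V →ₗ[ℝ] V) (hA : ∀ x y : V, ω x y = η (A x) y)
    (hA2 : A ∘ₗ A = -LinearMap.id) :
    (∀ x₁ x₂ x₃ x₄ : V, wedge2 ω ω x₁ x₂ x₃ x₄ = wedge2 η η x₁ x₂ x₃ x₄) ∧
    (∀ x₁ x₂ x₃ x₄ : V, wedge2 ω η x₁ x₂ x₃ x₄ = 0) := by
  -- basic consequences
  have hA2' : ∀ x : V, A (A x) = -x := by
    intro x
    have := LinearMap.ext_iff.mp hA2 x
    simpa using this
  have hωas : ∀ x y : V, ω y x = -ω x y := by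
    intro x y
    have h := hω_alt (x + y)
    simp only [map_add, LinearMap.add_apply, hω_alt] at h
    linarith
  have hηas : ∀ x y : V, η y x = -η x y := by
    intro x y
    have h := hη_alt (x + y)
    simp only [map_add, LinearMap.add_apply, hη_alt] at h
    linarith
  have hηA : ∀ x y : V, η (A x) y = ω x y := fun x y => (hA x y).symm
  have hωA : ∀ x y : V, ω (A x) y = -η x y := by
    intro x y
    rw [hA (A x) y, hA2' x]
    simp
  have hηAr : ∀ x y : V, η x (A y) = ω x y := by
    intro x y
    rw [hηas (A y) x, hηA, hωas]
    exact neg_neg _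
  have hωAr : ∀ x y : V, ω x (A y) = -η x y := by
    intro x y
    rw [hωas (A y) x, hωA y x, hηas x y]
    simp
  -- complex structure on V
  letI sm : SMul ℂ V := ⟨fun z x => z.re • x - z.im • A x⟩
  have smul_def : ∀ (z : ℂ) (x : V), z • x = z.re • x - z.im • A x := fun _ _ => rfl
  letI : Module ℂ V := Module.ofMinimalAxioms
    (fun r x y => by
      rw [smul_def, smul_def, smul_def]
      simp only [map_add, smul_add]
      abel)
    (fun r s x => by
      rw [smul_def, smul_def, smul_def]
      simp only [Complex.add_re, Complex.add_im, add_smul]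
      abel)
    (fun r s x => by
      rw [smul_def, smul_def, smul_def]
      simp only [Complex.mul_re, Complex.mul_im, map_sub, map_smul, smul_sub,
        smul_smul, sub_smul, add_smul, hA2', smul_neg, mul_comm]
      abel)
    (fun x => by
      rw [smul_def]
      simp)
  letI : IsScalarTower ℝ ℂ V := ⟨by
    intro r z x
    rw [smul_def, smul_def]
    simp only [Complex.smul_re, Complex.smul_im, smul_sub, smul_smul, smul_eq_mul]⟩
  haveI : FiniteDimensional ℂ V := Module.Finite.right ℝ ℂ V
  have hrk : Module.finrank ℂ V < 4 := by
    have h := Module.finrank_mul_finrank ℝ ℂ V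
    rw [Complex.finrank_real_complex, h4] at h
    omega
  -- the complex bilinear form Ω = η + iω
  set Ω : V → V → ℂ := fun x y => (η x y : ℂ) + (ω x y : ℂ) * Complex.I with hΩ
  have hre : ∀ x y : V, (Ω x y).re = η x y := by intro x y; simp [hΩ]
  have him : ∀ x y : V, (Ω x y).im = ω x y := by intro x y; simp [hΩ]
  have haddl : ∀ x x' y : V, Ω (x + x') y = Ω x y + Ω x' y := by
    intro x x' y
    apply Complex.ext <;> simp [hΩ, map_add] <;> ring
  have haddr : ∀ x y y' : V, Ω x (y + y') = Ω x y + Ω x y' := by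
    intro x y y'
    apply Complex.ext <;> simp [hΩ, map_add] <;> ring
  have halt : ∀ x : V, Ω x x = 0 := by
    intro x
    apply Complex.ext <;> simp [hΩ, hω_alt, hη_alt]
  have hanti : ∀ x y : V, Ω y x = -Ω x y := by
    intro x y
    apply Complex.ext
    · simp [hΩ, hηas x y]
    · simp [hΩ, hωas x y]
  have hsmull : ∀ (z : ℂ) (x y : V), Ω (z • x) y = z * Ω x y := by
    intro z x y
    rw [smul_def]
    apply Complex.ext <;>
      simp [hΩ, Complex.mul_re, Complex.mul_im, map_sub, map_smul, hηA, hωA] <;> ring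
  have hsmulr : ∀ (z : ℂ) (x y : V), Ω x (z • y) = z * Ω x y := by
    intro z x y
    rw [smul_def]
    apply Complex.ext <;>
      simp [hΩ, Complex.mul_re, Complex.mul_im, map_sub, map_smul, hηAr, hωAr] <;> ring
  have key : ∀ x₁ x₂ x₃ x₄ : V,
      Ω x₁ x₂ * Ω x₃ x₄ - Ω x₁ x₃ * Ω x₂ x₄ + Ω x₁ x₄ * Ω x₂ x₃ = 0 :=
    fun x₁ x₂ x₃ x₄ =>
      quad_eq_zero hrk Ω haddl haddr hsmull hsmulr halt hanti x₁ x₂ x₃ x₄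
  constructor
  · intro x₁ x₂ x₃ x₄
    have h := congrArg Complex.re (key x₁ x₂ x₃ x₄)
    simp only [Complex.add_re, Complex.sub_re, Complex.mul_re, Complex.zero_re,
      hre, him] at h
    simp only [wedge2]
    linear_combination (-2 : ℝ) * h
  · intro x₁ x₂ x₃ x₄
    have h := congrArg Complex.im (key x₁ x₂ x₃ x₄)
    simp only [Complex.add_im, Complex.sub_im, Complex.mul_im, Complex.zero_im,
      hre, him] at h
    simp only [wedge2]
    linear_combination h
end

section
/- Let V be a finite-dimensional real vector space and let ω₁, ω₂, ω₃ be nondegenerate alternating bilinear forms on V, with recursion operators A₁, A₂, A₃ defined (indices mod 3) by ω_i(x,y) = ω_{i+1}(A_{i+2} x, y), and suppose A₁² = A₂² = A₃² = −Id (a hyperholomorphic symplectic structure on V). Then the recursion operators pairwise anticommute and satisfy the quaternion relations: A₁A₂ = A₃ = −A₂A₁, A₂A₃ = A₁ = −A₃A₂, and A₃A₁ = A₂ = −A₁A₃. -/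
/-- For a hyperholomorphic symplectic structure (a triple of nondegenerate
alternating bilinear forms whose pairwise recursion operators all satisfy `Aᵢ² = -Id`), the
recursion operators pairwise anticommute and satisfy the quaternion relations. -/
theorem hyperholomorphic_quaternion_relations
    (V : Type*) [AddCommGroup V] [Module ℝ V] [FiniteDimensional ℝ V]
    (ω₁ ω₂ ω₃ : V →ₗ[ℝ] V →ₗ[ℝ] ℝ)
    (h₁_alt : ∀ x : V, ω₁ x x = 0) (h₂_alt : ∀ x : V, ω₂ x x = 0)
    (h₃_alt : ∀ x : V, ω₃ x x = 0)
    (h₁_nd : ∀ x : V, (∀ y : V, ω₁ x y = 0) → x = 0)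
    (h₂_nd : ∀ x : V, (∀ y : V, ω₂ x y = 0) → x = 0)
    (h₃_nd : ∀ x : V, (∀ y : V, ω₃ x y = 0) → x = 0)
    (A₁ A₂ A₃ : V →ₗ[ℝ] V)
    (hA₃ : ∀ x y : V, ω₁ x y = ω₂ (A₃ x) y)
    (hA₁ : ∀ x y : V, ω₂ x y = ω₃ (A₁ x) y)
    (hA₂ : ∀ x y : V, ω₃ x y = ω₁ (A₂ x) y)
    (hA₁2 : A₁ ∘ₗ A₁ = -LinearMap.id)
    (hA₂2 : A₂ ∘ₗ A₂ = -LinearMap.id)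
    (hA₃2 : A₃ ∘ₗ A₃ = -LinearMap.id) :
    (A₁ ∘ₗ A₂ = A₃ ∧ A₂ ∘ₗ A₁ = -A₃) ∧
      (A₂ ∘ₗ A₃ = A₁ ∧ A₃ ∘ₗ A₂ = -A₁) ∧
      (A₃ ∘ₗ A₁ = A₂ ∧ A₁ ∘ₗ A₃ = -A₂) := by
  -- pointwise versions of the square relations
  have p₁ : ∀ x : V, A₁ (A₁ x) = -x := fun x => by
    simpa using LinearMap.congr_fun hA₁2 x
  have p₂ : ∀ x : V, A₂ (A₂ x) = -x := fun x => by
    simpa using LinearMap.congr_fun hA₂2 x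
  have p₃ : ∀ x : V, A₃ (A₃ x) = -x := fun x => by
    simpa using LinearMap.congr_fun hA₃2 x
  -- key relation: A₃ ∘ A₂ ∘ A₁ = id, via nondegeneracy of ω₂
  have key : ∀ x : V, A₃ (A₂ (A₁ x)) = x := by
    intro x
    have h0 : A₃ (A₂ (A₁ x)) - x = 0 := by
      apply h₂_nd
      intro y
      have : ω₂ (A₃ (A₂ (A₁ x))) y = ω₂ x y := by
        rw [← hA₃, ← hA₂, ← hA₁]
      simp [map_sub, LinearMap.sub_apply, this]
    exact sub_eq_zero.mp h0
  -- q : A₂ A₁ = -A₃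
  have q : ∀ x : V, A₂ (A₁ x) = -A₃ x := by
    intro x
    have h := congrArg A₃ (key x)
    rw [p₃] at h
    exact neg_eq_iff_eq_neg.mp h
  -- r : A₃ A₁ = A₂
  have r : ∀ x : V, A₃ (A₁ x) = A₂ x := by
    intro x
    have h := q (A₁ x)
    rw [p₁, map_neg] at h
    exact (neg_inj.mp h.symm)
  -- s : A₃ A₂ = -A₁
  have s : ∀ x : V, A₃ (A₂ x) = -A₁ x := by
    intro x
    have h := congrArg A₃ (r x)
    rw [p₃] at h
    exact h.symm
  -- t : A₂ A₃ = A₁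
  have t : ∀ x : V, A₂ (A₃ x) = A₁ x := by
    intro x
    have h := congrArg A₂ (q x)
    rw [p₂, map_neg] at h
    exact (neg_inj.mp h).symm
  -- u : A₁ A₂ = A₃
  have u : ∀ x : V, A₁ (A₂ x) = A₃ x := by
    intro x
    have h := s (A₂ x)
    rw [p₂, map_neg] at h
    exact neg_inj.mp h.symm
  -- v : A₁ A₃ = -A₂
  have v : ∀ x : V, A₁ (A₃ x) = -A₂ x := by
    intro x
    have h := q (A₃ x)
    rw [p₃, neg_neg] at h
    have h2 := congrArg A₂ h
    rw [p₂] at h2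
    exact neg_eq_iff_eq_neg.mp h2
  refine ⟨⟨?_, ?_⟩, ⟨?_, ?_⟩, ⟨?_, ?_⟩⟩ <;> ext x <;>
    simp [LinearMap.comp_apply, LinearMap.neg_apply, q, r, s, t, u, v]
end

section
/- Let V be a finite-dimensional real vector space and let ω₁, ω₂, ω₃ be nondegenerate alternating bilinear forms on V, with recursion operators A₁, A₂, A₃ defined (indices mod 3) by ω_i(x,y) = ω_{i+1}(A_{i+2} x, y), and suppose A₁² = A₂² = A₃² = −Id. Then the bilinear form g(x,y) := ω_i(x, A_i y) is independent of i ∈ {1,2,3}; moreover g is symmetric, nondegenerate, and invariant under all three recursion operators: g(A_i x, A_i y) = g(x,y) for all x, y ∈ V and all i. -/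
/-- For a hyperholomorphic symplectic structure, the bilinear form
`g(x,y) := ωᵢ(x, Aᵢ y)` is independent of `i`; moreover `g` is symmetric, nondegenerate, and
invariant under all three recursion operators. -/
theorem hyperholomorphic_metric_properties
    (V : Type*) [AddCommGroup V] [Module ℝ V] [FiniteDimensional ℝ V]
    (ω₁ ω₂ ω₃ : V →ₗ[ℝ] V →ₗ[ℝ] ℝ)
    (h₁_alt : ∀ x : V, ω₁ x x = 0) (h₂_alt : ∀ x : V, ω₂ x x = 0)
    (h₃_alt : ∀ x : V, ω₃ x x = 0)
    (h₁_nd : ∀ x : V, (∀ y : V, ω₁ x y = 0) → x = 0)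
    (h₂_nd : ∀ x : V, (∀ y : V, ω₂ x y = 0) → x = 0)
    (h₃_nd : ∀ x : V, (∀ y : V, ω₃ x y = 0) → x = 0)
    (A₁ A₂ A₃ : V →ₗ[ℝ] V)
    (hA₃ : ∀ x y : V, ω₁ x y = ω₂ (A₃ x) y)
    (hA₁ : ∀ x y : V, ω₂ x y = ω₃ (A₁ x) y)
    (hA₂ : ∀ x y : V, ω₃ x y = ω₁ (A₂ x) y)
    (hA₁2 : A₁ ∘ₗ A₁ = -LinearMap.id)
    (hA₂2 : A₂ ∘ₗ A₂ = -LinearMap.id)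
    (hA₃2 : A₃ ∘ₗ A₃ = -LinearMap.id) :
    (∀ x y : V, ω₁ x (A₁ y) = ω₂ x (A₂ y)) ∧
      (∀ x y : V, ω₂ x (A₂ y) = ω₃ x (A₃ y)) ∧
      (∀ x y : V, ω₁ x (A₁ y) = ω₁ y (A₁ x)) ∧
      (∀ x : V, (∀ y : V, ω₁ x (A₁ y) = 0) → x = 0) ∧
      (∀ x y : V, ω₁ (A₁ x) (A₁ (A₁ y)) = ω₁ x (A₁ y)) ∧
      (∀ x y : V, ω₁ (A₂ x) (A₁ (A₂ y)) = ω₁ x (A₁ y)) ∧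
      (∀ x y : V, ω₁ (A₃ x) (A₁ (A₃ y)) = ω₁ x (A₁ y)) := by
  -- pointwise squares
  have sq₁ : ∀ x : V, A₁ (A₁ x) = -x := fun x => by
    have := congrFun (congrArg DFunLike.coe hA₁2) x; simpa using this
  have sq₂ : ∀ x : V, A₂ (A₂ x) = -x := fun x => by
    have := congrFun (congrArg DFunLike.coe hA₂2) x; simpa using this
  have sq₃ : ∀ x : V, A₃ (A₃ x) = -x := fun x => by
    have := congrFun (congrArg DFunLike.coe hA₃2) x; simpa using this
  -- skew-symmetry
  have skew₁ : ∀ x y : V, ω₁ x y = -ω₁ y x := by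
    intro x y
    have h := h₁_alt (x + y)
    simp [map_add, LinearMap.add_apply, h₁_alt x, h₁_alt y] at h
    linarith
  have skew₂ : ∀ x y : V, ω₂ x y = -ω₂ y x := by
    intro x y
    have h := h₂_alt (x + y)
    simp [map_add, LinearMap.add_apply, h₂_alt x, h₂_alt y] at h
    linarith
  have skew₃ : ∀ x y : V, ω₃ x y = -ω₃ y x := by
    intro x y
    have h := h₃_alt (x + y)
    simp [map_add, LinearMap.add_apply, h₃_alt x, h₃_alt y] at h
    linarith
  -- triple products equal the identity
  have id231 : ∀ x : V, A₂ (A₁ (A₃ x)) = x := by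
    intro x
    have h : ∀ y : V, ω₁ (A₂ (A₁ (A₃ x)) - x) y = 0 := by
      intro y
      have : ω₁ x y = ω₁ (A₂ (A₁ (A₃ x))) y := by
        rw [hA₃ x y, hA₁ (A₃ x) y, hA₂ (A₁ (A₃ x)) y]
      rw [map_sub, LinearMap.sub_apply, ← this, sub_self]
    exact sub_eq_zero.mp (h₁_nd _ h)
  have id312 : ∀ x : V, A₃ (A₂ (A₁ x)) = x := by
    intro x
    have h : ∀ y : V, ω₂ (A₃ (A₂ (A₁ x)) - x) y = 0 := by
      intro y
      have : ω₂ x y = ω₂ (A₃ (A₂ (A₁ x))) y := by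
        rw [hA₁ x y, hA₂ (A₁ x) y, hA₃ (A₂ (A₁ x)) y]
      rw [map_sub, LinearMap.sub_apply, ← this, sub_self]
    exact sub_eq_zero.mp (h₂_nd _ h)
  have id123 : ∀ x : V, A₁ (A₃ (A₂ x)) = x := by
    intro x
    have h : ∀ y : V, ω₃ (A₁ (A₃ (A₂ x)) - x) y = 0 := by
      intro y
      have : ω₃ x y = ω₃ (A₁ (A₃ (A₂ x))) y := by
        rw [hA₂ x y, hA₃ (A₂ x) y, hA₁ (A₃ (A₂ x)) y]
      rw [map_sub, LinearMap.sub_apply, ← this, sub_self]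
    exact sub_eq_zero.mp (h₃_nd _ h)
  -- pairwise products
  have m21 : ∀ x : V, A₂ (A₁ x) = -A₃ x := by
    intro x
    have h := id231 (-A₃ x)
    rw [map_neg, sq₃, neg_neg] at h
    exact h
  have m13 : ∀ x : V, A₁ (A₃ x) = -A₂ x := by
    intro x
    have h := id123 (-A₂ x)
    rw [map_neg, sq₂, neg_neg] at h
    exact h
  have m32 : ∀ x : V, A₃ (A₂ x) = -A₁ x := by
    intro x
    have h := id312 (-A₁ x)
    rw [map_neg, sq₁, neg_neg] at h
    exact h
  have m12 : ∀ x : V, A₁ (A₂ x) = A₃ x := by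
    intro x
    have h := m21 (A₂ x)
    rw [m32, neg_neg] at h
    have h2 := congrArg A₂ h
    rw [sq₂, m21] at h2
    exact neg_injective h2
  have m31 : ∀ x : V, A₃ (A₁ x) = A₂ x := by
    intro x
    have h := m21 (A₁ x)
    rw [sq₁, map_neg] at h
    exact (neg_injective h).symm
  -- g₁ = g₂
  have e12 : ∀ x y : V, ω₁ x (A₁ y) = ω₂ x (A₂ y) := by
    intro x y
    rw [skew₁ x (A₁ y), hA₃ (A₁ y) x, m31, ← skew₂ x (A₂ y)]
  -- g₂ = g₃
  have e23 : ∀ x y : V, ω₂ x (A₂ y) = ω₃ x (A₃ y) := by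
    intro x y
    rw [skew₂ x (A₂ y), hA₁ (A₂ y) x, m12, ← skew₃ x (A₃ y)]
  -- g₂(x,y) = g₁(y,x)
  have e21 : ∀ x y : V, ω₂ x (A₂ y) = ω₁ y (A₁ x) := by
    intro x y
    rw [hA₁ x (A₂ y), skew₃ (A₁ x) (A₂ y), hA₂ (A₂ y) (A₁ x), sq₂, map_neg,
      LinearMap.neg_apply, neg_neg]
  -- symmetry
  have sym : ∀ x y : V, ω₁ x (A₁ y) = ω₁ y (A₁ x) := by
    intro x y
    rw [e12 x y, e21 x y]
  refine ⟨e12, e23, sym, ?_, ?_, ?_, ?_⟩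
  · intro x h
    apply h₁_nd
    intro y
    have := h (-A₁ y)
    rw [map_neg, sq₁, neg_neg] at this
    exact this
  · intro x y
    rw [sq₁ y, map_neg, ← skew₁ y (A₁ x), ← sym x y]
  · intro x y
    rw [m12 y, ← hA₂ x (A₃ y), ← e23, ← e12]
  · intro x y
    rw [m13 y, map_neg, ← skew₁ (A₂ y) (A₃ x), ← hA₂ y (A₃ x), ← e23, ← e12, sym y x]
end

section
/- Let V be a four-dimensional real vector space and let ω₁, ω₂, ω₃ be nondegenerate alternating bilinear forms on V with recursion operators A₁, A₂, A₃ (defined by ω_i(x,y) = ω_{i+1}(A_{i+2} x, y), indices mod 3) satisfying A₁² = A₂² = A₃² = −Id. Then the associated symmetric bilinear form g(x,y) := ω₁(x, A₁ y) is definite: either g is positive definite or −g is positive definite. (In particular, every hyperholomorphic symplectic structure in complex dimension two is hyper-Kähler.) -/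
/-!
The recursion operators satisfy `A₂ A₁ A₃ = 1` by nondegeneracy of `ω₁`; together with
`Aᵢ² = -1` these are the relations of the quaternion units, so `ℍ` acts on `V`. Alternation of
`ω₃` and `ω₂` makes `A₂` and `A₃` self-adjoint for `ω₁`, hence all `Aᵢ` are skew-adjoint for `g`
and `g (a • x) (a • x) = |a|² g x x` for `a ∈ ℍ`. In dimension four `V = ℍ • x` for every
`x ≠ 0`, so `g v v` has the sign of `g x x` for all `v ≠ 0`, and `g x x ≠ 0` since `g` is
symmetric and nondegenerate.
-/

open Module Quaternion

namespace QuaternionAlgebra.Basis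

variable {R A : Type*} [CommRing R] [Ring A] [Algebra R A] {i j k : A}

def ofMulMulEqOne (hi : i * i = -1) (hj : j * j = -1) (hk : k * k = -1) (hjik : j * i * k = 1) :
    Basis A (-1 : R) 0 (-1) where
  i := i
  j := j
  k := k
  i_mul_i := by simp [hi]
  j_mul_j := by simp [hj]
  i_mul_j := by
    have hik : -(i * k) = j := by simpa [← mul_assoc, hj] using congrArg (j * ·) hjik
    simp [← hik, ← mul_assoc, hi]
  j_mul_i := by
    have hji : -(j * i) = k := by simpa [mul_assoc, hk] using congrArg (· * k) hjik
    simp [← hji]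

end QuaternionAlgebra.Basis

section BilinForm

variable {R V : Type*} [CommRing R] [AddCommGroup V] [Module R V]
  {ω : LinearMap.BilinForm R V}

theorem mul_mul_eq_one_of_separatingLeft {ω₁ ω₂ ω₃ : LinearMap.BilinForm R V}
    {A₁ A₂ A₃ : Module.End R V} (hω₁ : ω₁.SeparatingLeft)
    (hA₃ : ∀ x y, ω₁ x y = ω₂ (A₃ x) y) (hA₁ : ∀ x y, ω₂ x y = ω₃ (A₁ x) y)
    (hA₂ : ∀ x y, ω₃ x y = ω₁ (A₂ x) y) : A₂ * A₁ * A₃ = 1 :=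
  LinearMap.ext fun v => sub_eq_zero.mp <| hω₁ _ fun y => by
    simp [← hA₂, ← hA₁, ← hA₃]

theorem LinearMap.IsAlt.isSelfAdjoint {A : Module.End R V} (hω : ω.IsAlt)
    (hA : (ω ∘ₗ A).IsAlt) : ω.IsSelfAdjoint A := by
  intro x y
  have hxy := hA (x + y)
  have hx := hA x
  have hy := hA y
  simp only [LinearMap.comp_apply, map_add, LinearMap.add_apply] at hxy hx hy
  linear_combination hxy - hx - hy + LinearMap.IsAlt.neg hω x (A y)

theorem LinearMap.IsAlt.isSymm_compl₂ {A : Module.End R V} (hω : ω.IsAlt)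
    (hA : ω.IsSkewAdjoint A) : LinearMap.BilinForm.IsSymm (ω.compl₂ A) := by
  refine ⟨fun x y => ?_⟩
  calc ω x (A y) = -ω (A y) x := (LinearMap.IsAlt.neg hω (A y) x).symm
    _ = ω y (A x) := by simp [hA y x]

theorem LinearMap.isSkewAdjoint_compl₂ {A f f' : Module.End R V}
    (hf : ω.IsAdjointPair ω f f') (h : f' * A = -(A * f)) :
    (ω.compl₂ A).IsSkewAdjoint f := by
  intro x y
  simp [hf x, ← Module.End.mul_apply, h]

theorem LinearMap.SeparatingLeft.compl₂_of_surjective {A : Module.End R V}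
    (hω : ω.SeparatingLeft) (hA : Function.Surjective A) : (ω.compl₂ A).SeparatingLeft :=
  fun x hx => hω x fun y => by
    obtain ⟨z, rfl⟩ := hA y
    exact hx z

end BilinForm

namespace QuaternionAlgebra.Basis

variable {R V : Type*} [CommRing R] [AddCommGroup V] [Module R V]
  (q : Basis (Module.End R V) (-1 : R) 0 (-1))

theorem isAdjointPair_liftHom_star {g : LinearMap.BilinForm R V} (hi : g.IsSkewAdjoint q.i)
    (hj : g.IsSkewAdjoint q.j) (hk : g.IsSkewAdjoint q.k) (a : ℍ[R]) :
    g.IsAdjointPair g (q.liftHom a) (q.liftHom (star a)) := by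
  intro x y
  -- `liftHom_apply` is stated on `ℍ[R,-1,0,-1]` and does not fire on `ℍ[R]`
  change g (q.lift a x) y = g x (q.lift (star a : ℍ[R]) y)
  simp [lift, Algebra.algebraMap_eq_smul_one, hi _ _, hj _ _, hk _ _]

variable {ω : LinearMap.BilinForm R V} (hj : ω.IsSelfAdjoint q.j) (hk : ω.IsSelfAdjoint q.k)
include hj hk

theorem isSkewAdjoint_i : ω.IsSkewAdjoint q.i := by
  simpa [LinearMap.IsSkewAdjoint] using hj.mul hk

theorem isAdjointPair_compl₂_i_liftHom_star (a : ℍ[R]) :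
    (ω.compl₂ q.i).IsAdjointPair (ω.compl₂ q.i) (q.liftHom a) (q.liftHom (star a)) := by
  have hi : ω.IsAdjointPair ω q.i (-q.i : Module.End R V) := by
    simpa [LinearMap.IsSkewAdjoint] using q.isSkewAdjoint_i hj hk
  exact q.isAdjointPair_liftHom_star (LinearMap.isSkewAdjoint_compl₂ hi (by simp))
    (LinearMap.isSkewAdjoint_compl₂ hj (by simp)) (LinearMap.isSkewAdjoint_compl₂ hk (by simp)) a

end QuaternionAlgebra.Basis

namespace Quaternion

variable {V : Type*} [AddCommGroup V] [Module ℝ V] (φ : ℍ[ℝ] →ₐ[ℝ] Module.End ℝ V)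

theorem algHom_star_mul_self_apply (a : ℍ[ℝ]) (v : V) : φ (star a) (φ a v) = normSq a • v := by
  rw [← Module.End.mul_apply, ← map_mul, star_mul_self, ← algebraMap_def, AlgHom.commutes,
    Module.algebraMap_end_apply]

theorem eq_zero_or_eq_zero_of_algHom_apply_eq_zero {a : ℍ[ℝ]} {v : V} (h : φ a v = 0) :
    a = 0 ∨ v = 0 := by
  have := algHom_star_mul_self_apply φ a v
  rwa [h, map_zero, eq_comm, smul_eq_zero, normSq_eq_zero] at this

theorem exists_algHom_apply_eq_of_finrank_eq_four [FiniteDimensional ℝ V]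
    (h4 : finrank ℝ V = 4) {v : V} (hv : v ≠ 0) (w : V) : ∃ a, φ a v = w := by
  let orbit : ℍ[ℝ] →ₗ[ℝ] V := LinearMap.applyₗ v ∘ₗ φ.toLinearMap
  have hinj : Function.Injective orbit := by
    rw [← LinearMap.ker_eq_bot, LinearMap.ker_eq_bot']
    exact fun a ha => (eq_zero_or_eq_zero_of_algHom_apply_eq_zero φ ha).resolve_right hv
  exact (LinearMap.injective_iff_surjective_of_finrank_eq_finrank
    (finrank_eq_four.trans h4.symm)).mp hinj w

variable {φ} {g : LinearMap.BilinForm ℝ V}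

theorem apply_algHom_apply_self (hg : ∀ a, g.IsAdjointPair g (φ a) (φ (star a))) (a : ℍ[ℝ])
    (v : V) : g (φ a v) (φ a v) = normSq a * g v v := by
  rw [hg, algHom_star_mul_self_apply, map_smul, smul_eq_mul]

theorem definite_of_isAdjointPair_star [FiniteDimensional ℝ V] (h4 : finrank ℝ V = 4)
    (hsymm : g.IsSymm) (hsep : g.SeparatingLeft)
    (hg : ∀ a, g.IsAdjointPair g (φ a) (φ (star a))) :
    (∀ v, v ≠ 0 → 0 < g v v) ∨ (∀ v, v ≠ 0 → g v v < 0) := by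
  have : Nontrivial V := nontrivial_of_finrank_pos (R := ℝ) (by omega)
  obtain ⟨x, hx⟩ := exists_ne (0 : V)
  have hscale : ∀ v, v ≠ 0 → ∃ a : ℍ[ℝ], 0 < normSq a ∧ g v v = normSq a * g x x := by
    intro v hv
    obtain ⟨a, rfl⟩ := exists_algHom_apply_eq_of_finrank_eq_four φ h4 hx v
    have ha : a ≠ 0 := by
      rintro rfl
      simp at hv
    exact ⟨a, normSq_nonneg.lt_of_ne' (normSq_ne_zero.mpr ha), apply_algHom_apply_self hg a x⟩
  have hx0 : g x x ≠ 0 := by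
    intro h
    have halt : g.IsAlt := fun v => by
      rcases eq_or_ne v 0 with rfl | hv
      · simp
      · obtain ⟨a, -, hv⟩ := hscale v hv
        rw [hv, h, mul_zero]
    refine hx (hsep x fun y => ?_)
    linarith [LinearMap.IsAlt.neg halt x y, hsymm.eq x y]
  rcases hx0.lt_or_gt with hneg | hpos
  · refine .inr fun v hv => ?_
    obtain ⟨a, ha, hv⟩ := hscale v hv
    exact hv ▸ mul_neg_of_pos_of_neg ha hneg
  · refine .inl fun v hv => ?_
    obtain ⟨a, ha, hv⟩ := hscale v hv
    exact hv ▸ mul_pos ha hpos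

end Quaternion

theorem hyperholomorphic_dim_four_metric_definite_general
    (V : Type*) [AddCommGroup V] [Module ℝ V] [FiniteDimensional ℝ V]
    (h4 : Module.finrank ℝ V = 4)
    (ω₁ ω₂ ω₃ : V →ₗ[ℝ] V →ₗ[ℝ] ℝ)
    (h₁_alt : ∀ x : V, ω₁ x x = 0) (h₂_alt : ∀ x : V, ω₂ x x = 0)
    (h₃_alt : ∀ x : V, ω₃ x x = 0)
    (h₁_nd : ∀ x : V, (∀ y : V, ω₁ x y = 0) → x = 0)
    (A₁ A₂ A₃ : V →ₗ[ℝ] V)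
    (hA₃ : ∀ x y : V, ω₁ x y = ω₂ (A₃ x) y)
    (hA₁ : ∀ x y : V, ω₂ x y = ω₃ (A₁ x) y)
    (hA₂ : ∀ x y : V, ω₃ x y = ω₁ (A₂ x) y)
    (hA₁2 : A₁ ∘ₗ A₁ = -LinearMap.id)
    (hA₂2 : A₂ ∘ₗ A₂ = -LinearMap.id)
    (hA₃2 : A₃ ∘ₗ A₃ = -LinearMap.id) :
    (∀ x : V, x ≠ 0 → 0 < ω₁ x (A₁ x)) ∨ (∀ x : V, x ≠ 0 → ω₁ x (A₁ x) < 0) := by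
  let q : QuaternionAlgebra.Basis (Module.End ℝ V) (-1 : ℝ) 0 (-1) :=
    .ofMulMulEqOne hA₁2 hA₂2 hA₃2 (mul_mul_eq_one_of_separatingLeft h₁_nd hA₃ hA₁ hA₂)
  have hA₂_sa : ω₁.IsSelfAdjoint A₂ :=
    LinearMap.IsAlt.isSelfAdjoint h₁_alt fun x => by simp [← hA₂, h₃_alt]
  have hA₃_sa : ω₁.IsSelfAdjoint A₃ :=
    LinearMap.IsAlt.isSelfAdjoint h₁_alt fun x => by
      simp [hA₃, ← Module.End.mul_apply, Module.End.mul_eq_comp, hA₃2, h₂_alt]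
  have hA₁_surj : Function.Surjective A₁ := fun y => ⟨-A₁ y, by
    simp [← Module.End.mul_apply, Module.End.mul_eq_comp, hA₁2]⟩
  exact Quaternion.definite_of_isAdjointPair_star (φ := q.liftHom) h4
    (LinearMap.IsAlt.isSymm_compl₂ h₁_alt (q.isSkewAdjoint_i hA₂_sa hA₃_sa))
    (LinearMap.SeparatingLeft.compl₂_of_surjective h₁_nd hA₁_surj)
    (q.isAdjointPair_compl₂_i_liftHom_star hA₂_sa hA₃_sa)

/-- For a hyperholomorphic symplectic structure on a four-dimensional real
vector space, the associated symmetric bilinear form `g(x,y) = ω₁(x, A₁ y)` is definite: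
either `g` or `-g` is positive definite.  (Every hyperholomorphic symplectic structure in
complex dimension two is hyper-Kähler.) -/
theorem hyperholomorphic_dim_four_metric_definite
    (V : Type*) [AddCommGroup V] [Module ℝ V] [FiniteDimensional ℝ V]
    (h4 : Module.finrank ℝ V = 4)
    (ω₁ ω₂ ω₃ : V →ₗ[ℝ] V →ₗ[ℝ] ℝ)
    (h₁_alt : ∀ x : V, ω₁ x x = 0) (h₂_alt : ∀ x : V, ω₂ x x = 0)
    (h₃_alt : ∀ x : V, ω₃ x x = 0)
    (h₁_nd : ∀ x : V, (∀ y : V, ω₁ x y = 0) → x = 0)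
    (h₂_nd : ∀ x : V, (∀ y : V, ω₂ x y = 0) → x = 0)
    (h₃_nd : ∀ x : V, (∀ y : V, ω₃ x y = 0) → x = 0)
    (A₁ A₂ A₃ : V →ₗ[ℝ] V)
    (hA₃ : ∀ x y : V, ω₁ x y = ω₂ (A₃ x) y)
    (hA₁ : ∀ x y : V, ω₂ x y = ω₃ (A₁ x) y)
    (hA₂ : ∀ x y : V, ω₃ x y = ω₁ (A₂ x) y)
    (hA₁2 : A₁ ∘ₗ A₁ = -LinearMap.id)
    (hA₂2 : A₂ ∘ₗ A₂ = -LinearMap.id)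
    (hA₃2 : A₃ ∘ₗ A₃ = -LinearMap.id) :
    (∀ x : V, x ≠ 0 → 0 < ω₁ x (A₁ x)) ∨ (∀ x : V, x ≠ 0 → ω₁ x (A₁ x) < 0) :=
  hyperholomorphic_dim_four_metric_definite_general V h4 ω₁ ω₂ ω₃ h₁_alt h₂_alt h₃_alt h₁_nd A₁ A₂
    A₃ hA₃ hA₁ hA₂ hA₁2 hA₂2 hA₃2
end

section
/- Let V be a nonzero finite-dimensional real vector space and let ω₁, ω₂, ω₃ be nondegenerate alternating bilinear forms on V, with recursion operators A₁, A₂, A₃ defined (indices mod 3) by ω_i(x,y) = ω_{i+1}(A_{i+2} x, y), and suppose A₁² = −Id and A₂² = A₃² = Id. Then the recursion operators pairwise anticommute and A₂A₁ = A₃ = −A₁A₂, A₁A₃ = A₂ = −A₃A₁, A₂A₃ = A₁ = −A₃A₂; moreover neither A₂ nor A₃ equals Id or −Id. -/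
/-- For a hypersymplectic structure (a triple of nondegenerate alternating
bilinear forms on a nonzero space whose recursion operators satisfy `A₁² = -Id`,
`A₂² = A₃² = Id`), the recursion operators pairwise anticommute, satisfy
`A₂A₁ = A₃ = -A₁A₂`, `A₁A₃ = A₂ = -A₃A₁`, `A₂A₃ = A₁ = -A₃A₂`, and neither `A₂` nor `A₃`
equals `Id` or `-Id`. -/
theorem hypersymplectic_relations
    (V : Type*) [AddCommGroup V] [Module ℝ V] [FiniteDimensional ℝ V] [Nontrivial V]
    (ω₁ ω₂ ω₃ : V →ₗ[ℝ] V →ₗ[ℝ] ℝ)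
    (h₁_alt : ∀ x : V, ω₁ x x = 0) (h₂_alt : ∀ x : V, ω₂ x x = 0)
    (h₃_alt : ∀ x : V, ω₃ x x = 0)
    (h₁_nd : ∀ x : V, (∀ y : V, ω₁ x y = 0) → x = 0)
    (h₂_nd : ∀ x : V, (∀ y : V, ω₂ x y = 0) → x = 0)
    (h₃_nd : ∀ x : V, (∀ y : V, ω₃ x y = 0) → x = 0)
    (A₁ A₂ A₃ : V →ₗ[ℝ] V)
    (hA₃ : ∀ x y : V, ω₁ x y = ω₂ (A₃ x) y)
    (hA₁ : ∀ x y : V, ω₂ x y = ω₃ (A₁ x) y)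
    (hA₂ : ∀ x y : V, ω₃ x y = ω₁ (A₂ x) y)
    (hA₁2 : A₁ ∘ₗ A₁ = -LinearMap.id)
    (hA₂2 : A₂ ∘ₗ A₂ = LinearMap.id)
    (hA₃2 : A₃ ∘ₗ A₃ = LinearMap.id) :
    (A₂ ∘ₗ A₁ = A₃ ∧ A₁ ∘ₗ A₂ = -A₃) ∧
      (A₁ ∘ₗ A₃ = A₂ ∧ A₃ ∘ₗ A₁ = -A₂) ∧
      (A₂ ∘ₗ A₃ = A₁ ∧ A₃ ∘ₗ A₂ = -A₁) ∧
      (A₂ ≠ LinearMap.id ∧ A₂ ≠ -LinearMap.id ∧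
        A₃ ≠ LinearMap.id ∧ A₃ ≠ -LinearMap.id) := by
  -- pointwise versions of the square hypotheses
  have p1 : ∀ x : V, A₁ (A₁ x) = -x := fun x => by
    have := congrArg (fun f : V →ₗ[ℝ] V => f x) hA₁2; simpa using this
  have p2 : ∀ x : V, A₂ (A₂ x) = x := fun x => by
    have := congrArg (fun f : V →ₗ[ℝ] V => f x) hA₂2; simpa using this
  have p3 : ∀ x : V, A₃ (A₃ x) = x := fun x => by
    have := congrArg (fun f : V →ₗ[ℝ] V => f x) hA₃2; simpa using this
  -- key identity A₂ A₁ A₃ = id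
  have hk : ∀ x : V, A₂ (A₁ (A₃ x)) = x := by
    intro x
    have h : A₂ (A₁ (A₃ x)) - x = 0 := by
      apply h₁_nd
      intro y
      rw [map_sub, LinearMap.sub_apply, ← hA₂, ← hA₁, ← hA₃, sub_self]
    exact sub_eq_zero.mp h
  -- individual composition identities, pointwise
  have a21 : ∀ x : V, A₂ (A₁ x) = A₃ x := by
    intro x
    calc A₂ (A₁ x) = A₂ (A₁ (A₃ (A₃ x))) := by rw [p3]
    _ = A₃ x := hk _
  have a13 : ∀ x : V, A₁ (A₃ x) = A₂ x := by
    intro x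
    calc A₁ (A₃ x) = A₂ (A₂ (A₁ (A₃ x))) := (p2 _).symm
    _ = A₂ x := by rw [hk]
  have a12 : ∀ x : V, A₁ (A₂ x) = -A₃ x := by
    intro x
    calc A₁ (A₂ x) = A₁ (A₁ (A₃ x)) := by rw [a13]
    _ = -A₃ x := p1 _
  have a31 : ∀ x : V, A₃ (A₁ x) = -A₂ x := by
    intro x
    calc A₃ (A₁ x) = A₂ (A₁ (A₁ x)) := (a21 _).symm
    _ = A₂ (-x) := by rw [p1]
    _ = -A₂ x := map_neg _ _
  have a23 : ∀ x : V, A₂ (A₃ x) = A₁ x := by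
    intro x
    calc A₂ (A₃ x) = A₂ (A₂ (A₁ x)) := by rw [a21]
    _ = A₁ x := p2 _
  have a32 : ∀ x : V, A₃ (A₂ x) = -A₁ x := by
    intro x
    calc A₃ (A₂ x) = A₂ (A₁ (A₂ x)) := (a21 _).symm
    _ = A₂ (-A₃ x) := by rw [a12]
    _ = -A₂ (A₃ x) := map_neg _ _
    _ = -A₁ x := by rw [a23]
  -- a nonzero vector and the "no x = -x" fact
  obtain ⟨x₀, hx₀⟩ := exists_ne (0 : V)
  have hneq : ¬ (x₀ = -x₀) := by
    intro h
    apply hx₀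
    have hsum : x₀ + x₀ = 0 := by nth_rewrite 2 [h]; abel
    have h2 : (2 : ℝ) • x₀ = 0 := by rw [two_smul]; exact hsum
    rcases smul_eq_zero.mp h2 with h' | h'
    · norm_num at h'
    · exact h'
  refine ⟨⟨?_, ?_⟩, ⟨?_, ?_⟩, ⟨?_, ?_⟩, ?_, ?_, ?_, ?_⟩
  · ext x; exact a21 x
  · ext x; simpa using a12 x
  · ext x; exact a13 x
  · ext x; simpa using a31 x
  · ext x; exact a23 x
  · ext x; simpa using a32 x
  · intro h
    apply hneq
    have h3 : ∀ x : V, A₃ x = A₁ x := fun x => by rw [← a21 x, h]; simp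
    calc x₀ = A₃ (A₃ x₀) := (p3 _).symm
    _ = A₁ (A₁ x₀) := by rw [h3 x₀, h3 (A₁ x₀)]
    _ = -x₀ := p1 _
  · intro h
    apply hneq
    have h3 : ∀ x : V, A₃ x = -A₁ x := fun x => by rw [← a21 x, h]; simp
    calc x₀ = A₃ (A₃ x₀) := (p3 _).symm
    _ = -x₀ := by rw [h3 x₀, map_neg, h3 (A₁ x₀), neg_neg, p1]
  · intro h
    apply hneq
    have h3 : ∀ x : V, A₂ x = A₁ x := fun x => by rw [← a13 x, h]; simp
    calc x₀ = A₂ (A₂ x₀) := (p2 _).symm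
    _ = A₁ (A₁ x₀) := by rw [h3 x₀, h3 (A₁ x₀)]
    _ = -x₀ := p1 _
  · intro h
    apply hneq
    have h3 : ∀ x : V, A₂ x = -A₁ x := fun x => by rw [← a13 x, h]; simp
    calc x₀ = A₂ (A₂ x₀) := (p2 _).symm
    _ = -x₀ := by rw [h3 x₀, map_neg, h3 (A₁ x₀), neg_neg, p1]
end

section
/- Let V be a finite-dimensional real vector space and let ω₁, ω₂, ω₃ be nondegenerate alternating bilinear forms on V with recursion operators A₁, A₂, A₃ (defined by ω_i(x,y) = ω_{i+1}(A_{i+2} x, y), indices mod 3) satisfying A₁² = −Id and A₂² = A₃² = Id, and let g(x,y) := ω₁(x, A₁ y) be the associated symmetric nondegenerate bilinear form. Then g has neutral signature: there exist subspaces P and N of V with V = P ⊕ N, dim P = dim N, g positive definite on P, and g negative definite on N. -/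
/-!
Chaining the three defining identities gives `ω₁ x y = ω₁ (A₂ A₁ A₃ x) y`, so `A₂ A₁ A₃ = 1`, and
together with the squares this yields the split-quaternion relations `A₂ A₃ = A₁`, `A₃ A₂ = -A₁`.
Alternation of `ω₂` and `ω₃` makes `A₃` and `A₂` self-adjoint for `ω₁`, so `A₁ = A₂ A₃` has adjoint
`A₃ A₂ = -A₁`. Hence `g(x, y) = ω₁(x, A₁ y)` is symmetric and nondegenerate, and the involution
`A₂` is an isometry from `g` to `-g`. By Sylvester's law of inertia `g` and `-g` have the same
number of positive squares, and `V` splits into a positive definite and a negative definite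
subspace, both of that dimension.
-/

open Module LinearMap

namespace QuadraticForm

variable {𝕜 M : Type*} [Field 𝕜] [LinearOrder 𝕜] [AddCommGroup M] [Module 𝕜 M]
  {Q : QuadraticForm 𝕜 M}

theorem sigPos_eq_sigNeg_of_equivalent_neg (h : Q.Equivalent (-Q)) : sigPos Q = sigNeg Q :=
  h.sigPos_eq.trans sigPos_neg

variable [IsStrictOrderedRing 𝕜]

theorem disjoint_of_posDef_of_negDef {P N : Submodule 𝕜 M} (hP : (Q.restrict P).PosDef)
    (hN : ((-Q).restrict N).PosDef) : Disjoint P N := by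
  rw [Submodule.disjoint_def]
  intro x hxP hxN
  by_contra hx
  have hpos := hP ⟨x, hxP⟩ (by simpa using hx)
  have hneg := hN ⟨x, hxN⟩ (by simpa using hx)
  simp only [QuadraticMap.restrict_apply, _root_.neg_apply] at hpos hneg
  linarith

variable [FiniteDimensional 𝕜 M]

theorem exists_isCompl_posDef_negDef (hQ : Q.radical = ⊥) :
    ∃ P N : Submodule 𝕜 M, IsCompl P N ∧ finrank 𝕜 P = sigPos Q ∧ finrank 𝕜 N = sigNeg Q ∧
      (Q.restrict P).PosDef ∧ ((-Q).restrict N).PosDef := by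
  obtain ⟨P, hP, hPpos⟩ := exists_finrank_eq_sigPos_and_posDef Q
  obtain ⟨N, hN, hNneg⟩ := exists_finrank_eq_sigNeg_and_negDef Q
  have hdim : finrank 𝕜 M = finrank 𝕜 P + finrank 𝕜 N := by
    rw [hP, hN, ← sigPos_add_sigNeg_add_radical (Q := Q), hQ, finrank_bot, add_zero]
  refine ⟨P, N, ?_, hP, hN, hPpos, hNneg⟩
  exact (Submodule.isCompl_iff_disjoint P N hdim.le).2
    (disjoint_of_posDef_of_negDef hPpos hNneg)

end QuadraticForm

theorem LinearMap.IsSymm.radical_toQuadraticMap_eq_bot {K M : Type*} [Field K] [NeZero (2 : K)]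
    [AddCommGroup M] [Module K M] {B : M →ₗ[K] M →ₗ[K] K} (hB : B.IsSymm)
    (hB' : B.SeparatingLeft) : (LinearMap.BilinMap.toQuadraticMap B).radical = ⊥ := by
  refine (Submodule.eq_bot_iff _).2 fun x hx => hB' x fun y => ?_
  have h := LinearMap.congr_fun (QuadraticMap.radical_le_ker_polarBilin hx) y
  rw [QuadraticMap.polarBilin_apply_apply, LinearMap.BilinMap.polar_toQuadraticMap, ← hB.eq x y,
    RingHom.id_apply, LinearMap.zero_apply, ← two_mul] at h
  exact (mul_eq_zero.1 h).resolve_left two_ne_zero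

theorem mul_eq_and_mul_eq_neg_of_mul_mul_eq_one {R : Type*} [Ring R] {a b c : R}
    (ha : a * a = -1) (hb : b * b = 1) (hc : c * c = 1) (h : b * a * c = 1) :
    b * c = a ∧ c * b = -a ∧ b * a * b = -a := by
  have hba : b * a = c := by
    calc b * a = b * a * c * c := by rw [mul_assoc (b * a), hc, mul_one]
      _ = c := by rw [h, one_mul]
  have hcb : c * b = -a := by
    calc c * b = -(c * b * (a * a)) := by rw [ha, mul_neg_one, neg_neg]
      _ = -(c * (b * a) * a) := by noncomm_ring
      _ = -a := by rw [hba, hc, one_mul]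
  refine ⟨by rw [← hba, ← mul_assoc, hb, one_mul], hcb, by rw [hba, hcb]⟩

namespace LinearMap

variable {R M : Type*} [CommRing R] [AddCommGroup M] [Module R M] {ω : M →ₗ[R] M →ₗ[R] R}

theorem SeparatingLeft.mul_mul_eq_one {ω₂ ω₃ : M →ₗ[R] M →ₗ[R] R} {A₁ A₂ A₃ : Module.End R M}
    (hω : ω.SeparatingLeft) (hA₃ : ∀ x y, ω x y = ω₂ (A₃ x) y)
    (hA₁ : ∀ x y, ω₂ x y = ω₃ (A₁ x) y) (hA₂ : ∀ x y, ω₃ x y = ω (A₂ x) y) :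
    A₂ * A₁ * A₃ = 1 := by
  ext x
  refine sub_eq_zero.1 (hω _ fun y => ?_)
  rw [map_sub, sub_apply, Module.End.mul_apply, Module.End.mul_apply, ← hA₂, ← hA₁, ← hA₃,
    Module.End.one_apply, sub_self]

theorem SeparatingLeft.compl₂ {A : Module.End R M} (hω : ω.SeparatingLeft)
    (hA : Function.Surjective A) : (ω.compl₂ A).SeparatingLeft := fun x hx =>
  hω x fun z => by
    obtain ⟨y, rfl⟩ := hA z
    exact hx y

theorem IsAlt.isAdjointPair_self {T : Module.End R M} (hω : ω.IsAlt) (hT : (ω ∘ₗ T).IsAlt) :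
    IsAdjointPair ω ω T T := fun x y =>
  (hT.neg y x).symm.trans (by rw [comp_apply, hω.neg])

theorem IsAlt.isSymm_compl₂_s17 {A : Module.End R M} (hω : ω.IsAlt) (hA : IsAdjointPair ω ω A ⇑(-A)) :
    (ω.compl₂ A).IsSymm :=
  ⟨fun x y => by
    rw [RingHom.id_apply, compl₂_apply, compl₂_apply, ← hω.neg (A x) y, hA x y, neg_apply,
      map_neg, neg_neg]⟩

theorem IsAdjointPair.compl₂_apply_apply {A T : Module.End R M} (hT : IsAdjointPair ω ω T T)
    (hTAT : T * A * T = -A) (x y : M) : ω.compl₂ A (T x) (T y) = -ω.compl₂ A x y := by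
  have h := LinearMap.congr_fun hTAT y
  simp only [Module.End.mul_apply, neg_apply] at h
  rw [compl₂_apply, compl₂_apply, hT, h, map_neg]

end LinearMap

theorem hypersymplectic_metric_neutral_signature_general
    (V : Type*) [AddCommGroup V] [Module ℝ V] [FiniteDimensional ℝ V]
    (ω₁ ω₂ ω₃ : V →ₗ[ℝ] V →ₗ[ℝ] ℝ)
    (h₁_alt : ∀ x : V, ω₁ x x = 0) (h₂_alt : ∀ x : V, ω₂ x x = 0)
    (h₃_alt : ∀ x : V, ω₃ x x = 0)
    (h₁_nd : ∀ x : V, (∀ y : V, ω₁ x y = 0) → x = 0)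
    (A₁ A₂ A₃ : V →ₗ[ℝ] V)
    (hA₃ : ∀ x y : V, ω₁ x y = ω₂ (A₃ x) y)
    (hA₁ : ∀ x y : V, ω₂ x y = ω₃ (A₁ x) y)
    (hA₂ : ∀ x y : V, ω₃ x y = ω₁ (A₂ x) y)
    (hA₁2 : A₁ ∘ₗ A₁ = -LinearMap.id)
    (hA₂2 : A₂ ∘ₗ A₂ = LinearMap.id)
    (hA₃2 : A₃ ∘ₗ A₃ = LinearMap.id) :
    ∃ P N : Submodule ℝ V, IsCompl P N ∧
      Module.finrank ℝ P = Module.finrank ℝ N ∧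
      (∀ x ∈ P, x ≠ 0 → 0 < ω₁ x (A₁ x)) ∧
      (∀ x ∈ N, x ≠ 0 → ω₁ x (A₁ x) < 0) := by
  have hω₁ : ω₁.IsAlt := h₁_alt
  obtain ⟨hA₂₃, hA₃₂, hA₂₁₂⟩ := mul_eq_and_mul_eq_neg_of_mul_mul_eq_one hA₁2 hA₂2 hA₃2
    (SeparatingLeft.mul_mul_eq_one h₁_nd hA₃ hA₁ hA₂)
  have hA₂_adj : IsAdjointPair ω₁ ω₁ A₂ A₂ :=
    hω₁.isAdjointPair_self fun x => by rw [comp_apply, ← hA₂, h₃_alt]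
  have hA₃_adj : IsAdjointPair ω₁ ω₁ A₃ A₃ :=
    hω₁.isAdjointPair_self fun x => by
      rw [comp_apply, hA₃, ← comp_apply A₃ A₃, hA₃2, id_apply, h₂_alt]
  have hA₁_adj : IsAdjointPair ω₁ ω₁ A₁ ⇑(-A₁) := by
    rw [← hA₃₂, ← hA₂₃]
    exact hA₂_adj.mul hA₃_adj
  have hA₁_surj : Function.Surjective A₁ := fun z =>
    ⟨-A₁ z, by rw [map_neg, ← comp_apply A₁ A₁, hA₁2, LinearMap.neg_apply, id_apply, neg_neg]⟩
  set Q := BilinMap.toQuadraticMap (ω₁.compl₂ A₁)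
  have hrad : Q.radical = ⊥ :=
    (hω₁.isSymm_compl₂_s17 hA₁_adj).radical_toQuadraticMap_eq_bot
      (SeparatingLeft.compl₂ h₁_nd hA₁_surj)
  have hneg : Q.Equivalent (-Q) :=
    ⟨⟨LinearEquiv.ofInvolutive A₂ (LinearMap.congr_fun hA₂2), fun x =>
      neg_eq_iff_eq_neg.2 (hA₂_adj.compl₂_apply_apply hA₂₁₂ x x)⟩⟩
  obtain ⟨P, N, hPN, hP, hN, hPpos, hNneg⟩ := QuadraticForm.exists_isCompl_posDef_negDef hrad
  refine ⟨P, N, hPN, ?_, fun x hx h0 => hPpos ⟨x, hx⟩ (by simpa using h0),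
    fun x hx h0 => neg_pos.1 (hNneg ⟨x, hx⟩ (by simpa using h0))⟩
  rw [hP, hN, QuadraticForm.sigPos_eq_sigNeg_of_equivalent_neg hneg]

/-- For a hypersymplectic structure (`A₁² = -Id`, `A₂² = A₃² = Id`), the
associated symmetric nondegenerate bilinear form `g(x,y) := ω₁(x, A₁ y)` has neutral
signature: there are complementary subspaces `P`, `N` of equal dimension on which `g` is
positive definite and negative definite respectively. -/
theorem hypersymplectic_metric_neutral_signature
    (V : Type*) [AddCommGroup V] [Module ℝ V] [FiniteDimensional ℝ V]
    (ω₁ ω₂ ω₃ : V →ₗ[ℝ] V →ₗ[ℝ] ℝ)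
    (h₁_alt : ∀ x : V, ω₁ x x = 0) (h₂_alt : ∀ x : V, ω₂ x x = 0)
    (h₃_alt : ∀ x : V, ω₃ x x = 0)
    (h₁_nd : ∀ x : V, (∀ y : V, ω₁ x y = 0) → x = 0)
    (h₂_nd : ∀ x : V, (∀ y : V, ω₂ x y = 0) → x = 0)
    (h₃_nd : ∀ x : V, (∀ y : V, ω₃ x y = 0) → x = 0)
    (A₁ A₂ A₃ : V →ₗ[ℝ] V)
    (hA₃ : ∀ x y : V, ω₁ x y = ω₂ (A₃ x) y)
    (hA₁ : ∀ x y : V, ω₂ x y = ω₃ (A₁ x) y)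
    (hA₂ : ∀ x y : V, ω₃ x y = ω₁ (A₂ x) y)
    (hA₁2 : A₁ ∘ₗ A₁ = -LinearMap.id)
    (hA₂2 : A₂ ∘ₗ A₂ = LinearMap.id)
    (hA₃2 : A₃ ∘ₗ A₃ = LinearMap.id) :
    ∃ P N : Submodule ℝ V, IsCompl P N ∧
      Module.finrank ℝ P = Module.finrank ℝ N ∧
      (∀ x ∈ P, x ≠ 0 → 0 < ω₁ x (A₁ x)) ∧
      (∀ x ∈ N, x ≠ 0 → ω₁ x (A₁ x) < 0) :=
  hypersymplectic_metric_neutral_signature_general V ω₁ ω₂ ω₃ h₁_alt h₂_alt h₃_alt h₁_nd A₁ A₂ A₃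
    hA₃ hA₁ hA₂ hA₁2 hA₂2 hA₃2
end

section
/- Let V be a finite-dimensional real vector space and let ω₁, ω₂, ω₃ be nondegenerate alternating bilinear forms on V, with recursion operators A₁, A₂, A₃ defined (indices mod 3) by ω_i(x,y) = ω_{i+1}(A_{i+2} x, y), and suppose A₁² = A₂² = −Id and A₃² = Id (a holomorphic symplectic pair). Then the recursion operators pairwise commute and satisfy A₂A₁ = A₁A₂ = A₃, A₁A₃ = A₃A₁ = −A₂, and A₂A₃ = A₃A₂ = −A₁. -/
/-- For a holomorphic symplectic pair (a triple of nondegenerate alternating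
bilinear forms whose recursion operators satisfy `A₁² = A₂² = -Id`, `A₃² = Id`), the recursion
operators pairwise commute and satisfy `A₂A₁ = A₁A₂ = A₃`, `A₁A₃ = A₃A₁ = -A₂`, and
`A₂A₃ = A₃A₂ = -A₁`. -/
theorem holomorphic_symplectic_pair_relations
    (V : Type*) [AddCommGroup V] [Module ℝ V] [FiniteDimensional ℝ V]
    (ω₁ ω₂ ω₃ : V →ₗ[ℝ] V →ₗ[ℝ] ℝ)
    (h₁_alt : ∀ x : V, ω₁ x x = 0) (h₂_alt : ∀ x : V, ω₂ x x = 0)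
    (h₃_alt : ∀ x : V, ω₃ x x = 0)
    (h₁_nd : ∀ x : V, (∀ y : V, ω₁ x y = 0) → x = 0)
    (h₂_nd : ∀ x : V, (∀ y : V, ω₂ x y = 0) → x = 0)
    (h₃_nd : ∀ x : V, (∀ y : V, ω₃ x y = 0) → x = 0)
    (A₁ A₂ A₃ : V →ₗ[ℝ] V)
    (hA₃ : ∀ x y : V, ω₁ x y = ω₂ (A₃ x) y)
    (hA₁ : ∀ x y : V, ω₂ x y = ω₃ (A₁ x) y)
    (hA₂ : ∀ x y : V, ω₃ x y = ω₁ (A₂ x) y)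
    (hA₁2 : A₁ ∘ₗ A₁ = -LinearMap.id)
    (hA₂2 : A₂ ∘ₗ A₂ = -LinearMap.id)
    (hA₃2 : A₃ ∘ₗ A₃ = LinearMap.id) :
    (A₂ ∘ₗ A₁ = A₃ ∧ A₁ ∘ₗ A₂ = A₃) ∧
      (A₁ ∘ₗ A₃ = -A₂ ∧ A₃ ∘ₗ A₁ = -A₂) ∧
      (A₂ ∘ₗ A₃ = -A₁ ∧ A₃ ∘ₗ A₂ = -A₁) := by
  -- a linear map preserving a nondegenerate form is the identity
  have key : ∀ (ω : V →ₗ[ℝ] V →ₗ[ℝ] ℝ), (∀ x : V, (∀ y : V, ω x y = 0) → x = 0) →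
      ∀ (B : V →ₗ[ℝ] V), (∀ x y : V, ω (B x) y = ω x y) → ∀ x, B x = x := by
    intro ω hnd B hB x
    have h0 : B x - x = 0 := by
      apply hnd
      intro y
      simp [map_sub, LinearMap.sub_apply, hB]
    simpa [sub_eq_zero] using h0
  have p1 : ∀ x, A₃ (A₂ (A₁ x)) = x := by
    apply key ω₂ h₂_nd (A₃ ∘ₗ (A₂ ∘ₗ A₁))
    intro x y
    simp only [LinearMap.comp_apply]
    rw [← hA₃, ← hA₂, ← hA₁]
  have p2 : ∀ x, A₁ (A₃ (A₂ x)) = x := by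
    apply key ω₃ h₃_nd (A₁ ∘ₗ (A₃ ∘ₗ A₂))
    intro x y
    simp only [LinearMap.comp_apply]
    rw [← hA₁, ← hA₃, ← hA₂]
  have p3 : ∀ x, A₂ (A₁ (A₃ x)) = x := by
    apply key ω₁ h₁_nd (A₂ ∘ₗ (A₁ ∘ₗ A₃))
    intro x y
    simp only [LinearMap.comp_apply]
    rw [← hA₂, ← hA₁, ← hA₃]
  have q1 : ∀ x, A₁ (A₁ x) = -x := fun x => by simpa using LinearMap.congr_fun hA₁2 x
  have q2 : ∀ x, A₂ (A₂ x) = -x := fun x => by simpa using LinearMap.congr_fun hA₂2 x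
  have q3 : ∀ x, A₃ (A₃ x) = x := fun x => by simpa using LinearMap.congr_fun hA₃2 x
  have s1 : ∀ x, A₂ (A₁ x) = A₃ x := fun x => by
    have := congrArg A₃ (p1 x); rwa [q3] at this
  have s3 : ∀ x, A₁ (A₃ x) = -A₂ x := fun x => by
    have := congrArg A₂ (p3 x)
    rw [q2] at this
    linear_combination (norm := module) -this
  have s2 : ∀ x, A₃ (A₂ x) = -A₁ x := fun x => by
    have := congrArg A₁ (p2 x)
    rw [q1] at this
    linear_combination (norm := module) -this
  have s4 : ∀ x, A₃ (A₁ x) = -A₂ x := fun x => by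
    have := s1 (A₁ x)
    rw [q1, map_neg] at this
    linear_combination (norm := module) -this
  have s5 : ∀ x, A₂ (A₃ x) = -A₁ x := fun x => by
    rw [← s1 x, q2]
  have s6 : ∀ x, A₁ (A₂ x) = A₃ x := fun x => by
    rw [show A₂ x = -(A₃ (A₁ x)) from by rw [s4, neg_neg], map_neg, s3, neg_neg, s1]
  refine ⟨⟨?_, ?_⟩, ⟨?_, ?_⟩, ⟨?_, ?_⟩⟩ <;> ext x <;>
    simp [LinearMap.comp_apply, s1, s2, s3, s4, s5, s6]
end

section
/- Let V₁ and V₂ be nonzero finite-dimensional real vector spaces, and for k = 1, 2 let ω_k and η_k be nondegenerate alternating bilinear forms on V_k whose recursion operator J_k (defined by ω_k(x,y) = η_k(J_k x, y)) satisfies J_k² = −Id. On V := V₁ × V₂ define σ₁ := ω₁ ⊕ ω₂, σ₂ := η₁ ⊕ η₂, and σ₃ := (−ω₁) ⊕ ω₂ (each acting on pairs componentwise). Then σ₁, σ₂, σ₃ are nondegenerate alternating bilinear forms on V, the recursion operator of (σ₁, σ₂) and the recursion operator of (σ₂, σ₃) both square to −Id, and the recursion operator of (σ₃, σ₁) squares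 to Id but is neither Id nor −Id. -/
/-- Given holomorphic symplectic structures `(ω₁, η₁)` on `V₁` and
`(ω₂, η₂)` on `V₂` (i.e. nondegenerate alternating bilinear forms whose recursion operators
square to `-Id`), the three forms `σ₁ = ω₁ ⊕ ω₂`, `σ₂ = η₁ ⊕ η₂`, `σ₃ = (-ω₁) ⊕ ω₂` on
`V₁ × V₂` are nondegenerate alternating bilinear forms; the recursion operators of `(σ₁, σ₂)`
and of `(σ₂, σ₃)` square to `-Id`, and the recursion operator of `(σ₃, σ₁)` squares to `Id`
but is neither `Id` nor `-Id`.  This is the product construction of holomorphic symplectic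
pairs. -/
theorem product_of_holomorphic_symplectic_is_holomorphic_symplectic_pair
    (V₁ V₂ : Type*) [AddCommGroup V₁] [Module ℝ V₁] [FiniteDimensional ℝ V₁] [Nontrivial V₁]
    [AddCommGroup V₂] [Module ℝ V₂] [FiniteDimensional ℝ V₂] [Nontrivial V₂]
    (ω₁ η₁ : V₁ →ₗ[ℝ] V₁ →ₗ[ℝ] ℝ) (ω₂ η₂ : V₂ →ₗ[ℝ] V₂ →ₗ[ℝ] ℝ)
    (hω₁_alt : ∀ x : V₁, ω₁ x x = 0) (hη₁_alt : ∀ x : V₁, η₁ x x = 0)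
    (hω₂_alt : ∀ x : V₂, ω₂ x x = 0) (hη₂_alt : ∀ x : V₂, η₂ x x = 0)
    (hω₁_nd : ∀ x : V₁, (∀ y : V₁, ω₁ x y = 0) → x = 0)
    (hη₁_nd : ∀ x : V₁, (∀ y : V₁, η₁ x y = 0) → x = 0)
    (hω₂_nd : ∀ x : V₂, (∀ y : V₂, ω₂ x y = 0) → x = 0)
    (hη₂_nd : ∀ x : V₂, (∀ y : V₂, η₂ x y = 0) → x = 0)
    (J₁ : V₁ →ₗ[ℝ] V₁) (hJ₁ : ∀ x y : V₁, ω₁ x y = η₁ (J₁ x) y)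
    (hJ₁2 : J₁ ∘ₗ J₁ = -LinearMap.id)
    (J₂ : V₂ →ₗ[ℝ] V₂) (hJ₂ : ∀ x y : V₂, ω₂ x y = η₂ (J₂ x) y)
    (hJ₂2 : J₂ ∘ₗ J₂ = -LinearMap.id) :
    ∀ σ₁ σ₂ σ₃ : (V₁ × V₂) →ₗ[ℝ] (V₁ × V₂) →ₗ[ℝ] ℝ,
      (∀ x y : V₁ × V₂, σ₁ x y = ω₁ x.1 y.1 + ω₂ x.2 y.2) →
      (∀ x y : V₁ × V₂, σ₂ x y = η₁ x.1 y.1 + η₂ x.2 y.2) →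
      (∀ x y : V₁ × V₂, σ₃ x y = -(ω₁ x.1 y.1) + ω₂ x.2 y.2) →
      ((∀ x : V₁ × V₂, σ₁ x x = 0) ∧ (∀ x : V₁ × V₂, σ₂ x x = 0) ∧
        (∀ x : V₁ × V₂, σ₃ x x = 0)) ∧
      ((∀ x : V₁ × V₂, (∀ y : V₁ × V₂, σ₁ x y = 0) → x = 0) ∧
        (∀ x : V₁ × V₂, (∀ y : V₁ × V₂, σ₂ x y = 0) → x = 0) ∧
        (∀ x : V₁ × V₂, (∀ y : V₁ × V₂, σ₃ x y = 0) → x = 0)) ∧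
      (∃ A : (V₁ × V₂) →ₗ[ℝ] (V₁ × V₂),
        (∀ x y : V₁ × V₂, σ₁ x y = σ₂ (A x) y) ∧ A ∘ₗ A = -LinearMap.id) ∧
      (∃ B : (V₁ × V₂) →ₗ[ℝ] (V₁ × V₂),
        (∀ x y : V₁ × V₂, σ₂ x y = σ₃ (B x) y) ∧ B ∘ₗ B = -LinearMap.id) ∧
      (∃ C : (V₁ × V₂) →ₗ[ℝ] (V₁ × V₂),
        (∀ x y : V₁ × V₂, σ₃ x y = σ₁ (C x) y) ∧ C ∘ₗ C = LinearMap.id ∧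
          C ≠ LinearMap.id ∧ C ≠ -LinearMap.id) := by

  intro σ₁ σ₂ σ₃ h1 h2 h3
  have hJ₁2' : ∀ x, J₁ (J₁ x) = -x := fun x => by
    have := congrFun (congrArg (fun f => f.toFun) hJ₁2) x; simpa using this
  have hJ₂2' : ∀ x, J₂ (J₂ x) = -x := fun x => by
    have := congrFun (congrArg (fun f => f.toFun) hJ₂2) x; simpa using this
  refine ⟨⟨fun x => by simp [h1, hω₁_alt, hω₂_alt],
          fun x => by simp [h2, hη₁_alt, hη₂_alt],
          fun x => by simp [h3, hω₁_alt, hω₂_alt]⟩, ?_, ?_, ?_, ?_⟩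
  · refine ⟨fun x hx => ?_, fun x hx => ?_, fun x hx => ?_⟩
    · have h1' : x.1 = 0 := hω₁_nd x.1 (fun y => by
        have := hx (y, 0); simp [h1] at this; exact this)
      have h2' : x.2 = 0 := hω₂_nd x.2 (fun y => by
        have := hx (0, y); simp [h1] at this; exact this)
      exact Prod.ext h1' h2'
    · have h1' : x.1 = 0 := hη₁_nd x.1 (fun y => by
        have := hx (y, 0); simp [h2] at this; exact this)
      have h2' : x.2 = 0 := hη₂_nd x.2 (fun y => by
        have := hx (0, y); simp [h2] at this; exact this)
      exact Prod.ext h1' h2'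
    · have h1' : x.1 = 0 := hω₁_nd x.1 (fun y => by
        have := hx (y, 0); simp [h3] at this
        simpa using neg_eq_zero.mp (by linarith [this]))
      have h2' : x.2 = 0 := hω₂_nd x.2 (fun y => by
        have := hx (0, y); simp [h3] at this; exact this)
      exact Prod.ext h1' h2'
  · refine ⟨LinearMap.prodMap J₁ J₂, fun x y => by simp [h1, h2, hJ₁, hJ₂], ?_⟩
    ext x <;> simp [hJ₁2', hJ₂2']
  · refine ⟨LinearMap.prodMap J₁ (-J₂), fun x y => ?_, ?_⟩
    · have e1 : η₁ x.1 y.1 = -(ω₁ (J₁ x.1) y.1) := by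
        rw [hJ₁ (J₁ x.1) y.1, hJ₁2']; simp
      have e2 : η₂ x.2 y.2 = ω₂ (-(J₂ x.2)) y.2 := by
        rw [hJ₂ (-(J₂ x.2)) y.2]; simp [hJ₂2']
      simp [h2, h3, e1, e2]
    · ext x <;> simp [hJ₁2', hJ₂2']
  · obtain ⟨v, hv⟩ := exists_ne (0 : V₁)
    obtain ⟨w, hw⟩ := exists_ne (0 : V₂)
    refine ⟨LinearMap.prodMap (-LinearMap.id) LinearMap.id,
      fun x y => by simp [h1, h3], by ext x <;> simp, ?_, ?_⟩
    · intro h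
      have hh := congrFun (congrArg (fun f => f.toFun) h) (v, 0)
      simp [Prod.ext_iff] at hh
      have h2 : (2 : ℝ) • v = 0 := by
        rw [two_smul]; nth_rewrite 1 [← hh]; simp
      rcases smul_eq_zero.mp h2 with h' | h'
      · norm_num at h'
      · exact hv h'
    · intro h
      have hh := congrFun (congrArg (fun f => f.toFun) h) (0, w)
      simp [Prod.ext_iff] at hh
      have h2 : (2 : ℝ) • w = 0 := by
        rw [two_smul]; nth_rewrite 1 [hh]; simp
      rcases smul_eq_zero.mp h2 with h' | h'
      · norm_num at h'
      · exact hw h'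
end
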